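/- arXiv:1807.08292 — 2 statements merged into one kernel-verified Lean document; each statement's English description precedes it below -/
import Mathlib

section
/- For every partition λ and positive integer k, there is a bijection between BSSYT(λ,k) and the set of triples (Q, j, C′) where Q ∈ RPP(λ,k), 1 ≤ j ≤ k, and C′ is a proper outside corner of the induced subshape α(Q,j). In particular, |BSSYT(λ,k)| = Σ_{Q ∈ RPP(λ,k)} Σ_{j=1}^{k} (number of proper outside corners of α(Q,j)). -/
open Polynomial

/-- The set of cells of the Young diagram of the partition with parts
`lam 1 ≥ lam 2 ≥ … ≥ lam r`, i.e. pairs `(i,j)` with `1 ≤ i ≤ r` and `1 ≤ j ≤ lam i`. -/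
def cells (lam : ℕ → ℕ) (r : ℕ) : Set (ℕ × ℕ) :=
  {p | 1 ≤ p.1 ∧ p.1 ≤ r ∧ 1 ≤ p.2 ∧ p.2 ≤ lam p.1}

/-- `lam` restricted to indices `1,…,r` is a partition with `r` (positive) parts. -/
def IsPartition (lam : ℕ → ℕ) (r : ℕ) : Prop :=
  (∀ i, 1 ≤ i → i + 1 ≤ r → lam (i + 1) ≤ lam i) ∧ (∀ i, 1 ≤ i → i ≤ r → 1 ≤ lam i)

/-- A partition with `r` rows and `c = lam 1` columns is balanced if every outward corner
of its southeast boundary lies on the main anti-diagonal: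
whenever `1 ≤ i < r` and `lam (i+1) < lam i`, one has `lam 1 * (r - i) = r * lam (i+1)`. -/
def IsBalanced (lam : ℕ → ℕ) (r : ℕ) : Prop :=
  ∀ i, 1 ≤ i → i < r → lam (i + 1) < lam i → lam 1 * (r - i) = r * lam (i + 1)

/-- Flagged semistandard Young tableaux of shape `lam` (with `r` rows):
positive entries, weakly increasing along rows, strictly increasing down columns,
entries in row `i` at most `k + i`; entries outside the diagram are normalized to `0`. -/
def SYT (lam : ℕ → ℕ) (r k : ℕ) : Set ((ℕ × ℕ) → ℕ) :=
  {T | (∀ p, p ∉ cells lam r → T p = 0) ∧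
       (∀ p ∈ cells lam r, 1 ≤ T p ∧ T p ≤ k + p.1) ∧
       (∀ i j, (i, j) ∈ cells lam r → (i, j + 1) ∈ cells lam r → T (i, j) ≤ T (i, j + 1)) ∧
       (∀ i j, (i, j) ∈ cells lam r → (i + 1, j) ∈ cells lam r → T (i, j) < T (i + 1, j))}

/-- Flagged barely set-valued semistandard Young tableaux of shape `lam` (with `r` rows):
finite nonempty sets of positive integers in each cell, exactly one cell receiving a
two-element set and all other cells singletons, weakly increasing along rows
(`A ≤ B` iff every element of `A` is at most every element of `B`) and strictly
increasing down columns, every entry in row `i` at most `k + i`;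
cells outside the diagram are normalized to `∅`. -/
def BSSYT (lam : ℕ → ℕ) (r k : ℕ) : Set ((ℕ × ℕ) → Finset ℕ) :=
  {T | (∀ p, p ∉ cells lam r → T p = ∅) ∧
       (∃ B ∈ cells lam r, (T B).card = 2 ∧ ∀ p ∈ cells lam r, p ≠ B → (T p).card = 1) ∧
       (∀ p ∈ cells lam r, ∀ x ∈ T p, 1 ≤ x ∧ x ≤ k + p.1) ∧
       (∀ i j, (i, j) ∈ cells lam r → (i, j + 1) ∈ cells lam r →
          ∀ x ∈ T (i, j), ∀ y ∈ T (i, j + 1), x ≤ y) ∧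
       (∀ i j, (i, j) ∈ cells lam r → (i + 1, j) ∈ cells lam r →
          ∀ x ∈ T (i, j), ∀ y ∈ T (i + 1, j), x < y)}

/-- Reverse plane partitions of shape `lam` (with `r` rows) with entries in `{0,…,k}`:
weakly increasing along rows and down columns; entries outside the diagram normalized to `0`. -/
def RPP (lam : ℕ → ℕ) (r k : ℕ) : Set ((ℕ × ℕ) → ℕ) :=
  {P | (∀ p, p ∉ cells lam r → P p = 0) ∧
       (∀ p ∈ cells lam r, P p ≤ k) ∧
       (∀ i j, (i, j) ∈ cells lam r → (i, j + 1) ∈ cells lam r → P (i, j) ≤ P (i, j + 1)) ∧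
       (∀ i j, (i, j) ∈ cells lam r → (i + 1, j) ∈ cells lam r → P (i, j) ≤ P (i + 1, j))}

/-- A subshape of `lam`: a down-closed subset of the cells of `lam`
(i.e. a Young diagram contained in `lam`). -/
def IsSubshape (lam : ℕ → ℕ) (r : ℕ) (μ : Set (ℕ × ℕ)) : Prop :=
  μ ⊆ cells lam r ∧
  ∀ p ∈ μ, ∀ q : ℕ × ℕ, 1 ≤ q.1 → q.1 ≤ p.1 → 1 ≤ q.2 → q.2 ≤ p.2 → q ∈ μ

/-- The induced subshape `α(P,i)`: cells of `lam` whose entry in `P` is strictly less than `i`. -/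
def alphaShape (lam : ℕ → ℕ) (r : ℕ) (P : (ℕ × ℕ) → ℕ) (i : ℕ) : Set (ℕ × ℕ) :=
  {p | p ∈ cells lam r ∧ P p < i}

/-- A corner of a subshape `μ`: a cell of `μ` such that the cells immediately below
and to the right are not in `μ`. -/
def IsShapeCorner (μ : Set (ℕ × ℕ)) (p : ℕ × ℕ) : Prop :=
  p ∈ μ ∧ (p.1 + 1, p.2) ∉ μ ∧ (p.1, p.2 + 1) ∉ μ

/-- A proper outside corner of a subshape `μ` of `lam`: a cell of `lam` not in `μ` whose
upper neighbour is in `μ` (or which lies in the first row) and whose left neighbour is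
in `μ` (or which lies in the first column). -/
def IsProperOutsideCorner (lam : ℕ → ℕ) (r : ℕ) (μ : Set (ℕ × ℕ)) (p : ℕ × ℕ) : Prop :=
  p ∈ cells lam r ∧ p ∉ μ ∧
  ((p.1 - 1, p.2) ∈ μ ∨ p.1 = 1) ∧ ((p.1, p.2 - 1) ∈ μ ∨ p.2 = 1)

/-- The jaggedness of a subshape `μ` of `lam`: the number of corners of `μ` plus the
number of proper outside corners of `μ`. -/
noncomputable def jag (lam : ℕ → ℕ) (r : ℕ) (μ : Set (ℕ × ℕ)) : ℕ :=
  {p | IsShapeCorner μ p}.ncard + {p | IsProperOutsideCorner lam r μ p}.ncard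

/-- `p` can be toggled into the subshape `μ`. -/
def ToggleIn (lam : ℕ → ℕ) (r : ℕ) (μ : Set (ℕ × ℕ)) (p : ℕ × ℕ) : Prop :=
  p ∉ μ ∧ IsSubshape lam r (insert p μ)

/-- `p` can be toggled out of the subshape `μ`. -/
def ToggleOut (lam : ℕ → ℕ) (r : ℕ) (μ : Set (ℕ × ℕ)) (p : ℕ × ℕ) : Prop :=
  p ∈ μ ∧ IsSubshape lam r (μ \ {p})

/-- The `j`-th part of the rectangular staircase partition `δ_d(b^a)`,
namely `b * (d - ⌈j/a⌉)`. -/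
def deltaSC (a b d : ℕ) : ℕ → ℕ := fun j => b * (d - (j + a - 1) / a)

/-!
Subtracting the row index `i` from the entries of row `i` turns a barely set-valued tableau `T`
into two fillings `lo ≤ hi` (cellwise minima and maxima) that differ in exactly one cell `C`:
entries of row `i` are at least `i`, so the flag `≤ k + i` becomes `≤ k` and strict increase
down columns becomes weak increase. Then `Q = hi` is a reverse plane partition and `lo` is `Q`
with the value at `C` lowered to some `j - 1 < Q C`; that `lo` still dominates the left and
upper neighbours of `C` says exactly that these lie in `α(Q, j)`, i.e. that `C` is a proper
outside corner of `α(Q, j)`.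
-/

theorem Finset.pair_eq_pair_of_le {α : Type*} [LinearOrder α] {a b c d : α} (hab : a ≤ b)
    (hcd : c ≤ d) (h : ({a, b} : Finset α) = {c, d}) : a = c ∧ b = d := by
  have h' : ({a, b} : Set α) = {c, d} := by rw [← Finset.coe_pair, h, Finset.coe_pair]
  rcases Set.pair_eq_pair_iff.mp h' with h | ⟨rfl, rfl⟩
  · exact h
  · exact ⟨le_antisymm hab hcd, le_antisymm hcd hab⟩

theorem Finset.eq_pair_csInf_csSup {α : Type*} [ConditionallyCompleteLinearOrder α]
    {s : Finset α} (hs : s.card = 1 ∨ s.card = 2) : s = {sInf (s : Set α), sSup (s : Set α)} := by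
  rcases hs with hs | hs
  · obtain ⟨a, rfl⟩ := Finset.card_eq_one.mp hs
    simp
  · obtain ⟨a, b, -, rfl⟩ := Finset.card_eq_two.mp hs
    rcases le_total a b with h | h <;> simp [h, Finset.pair_comm]

theorem Set.Finite.setOf_bounded_vanishing_off {ι : Type*} {S : Set ι} (hS : S.Finite) (k : ℕ) :
    {f : ι → ℕ | (∀ p ∉ S, f p = 0) ∧ ∀ p ∈ S, f p ≤ k}.Finite := by
  have : Finite S := hS
  refine Set.Finite.of_finite_image (f := fun f (p : S) => f p)
    ((Set.Finite.pi (t := fun _ => Set.Iic k) fun _ => Set.finite_Iic k).subset ?_) ?_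
  · rintro _ ⟨f, hf, rfl⟩ p -
    exact hf.2 p p.2
  · intro f hf g hg hfg
    funext p
    by_cases hp : p ∈ S
    · exact congrFun hfg ⟨p, hp⟩
    · rw [hf.1 p hp, hg.1 p hp]

theorem Set.ncard_setOf_fst_mem_snd_mem {α β : Type*} {A : Set α} {D : α → Set β}
    (hA : A.Finite) (hD : ∀ a ∈ A, (D a).Finite) :
    {t : α × β | t.1 ∈ A ∧ t.2 ∈ D t.1}.ncard = ∑ᶠ a ∈ A, (D a).ncard := by
  have hU : {t : α × β | t.1 ∈ A ∧ t.2 ∈ D t.1} = ⋃ a ∈ A, Prod.mk a '' D a := by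
    ext ⟨a, b⟩
    simp [and_comm]
  rw [hU, hA.ncard_biUnion fun a ha => (hD a ha).image _]
  · exact finsum_mem_congr rfl fun a _ => Set.ncard_image_of_injective _ (Prod.mk_right_injective a)
  · intro a _ a' _ hne
    refine Set.disjoint_left.mpr ?_
    rintro _ ⟨b, -, rfl⟩ ⟨b', -, h⟩
    exact hne (congrArg Prod.fst h).symm

section Shapes

variable {lam : ℕ → ℕ} {r : ℕ}

theorem IsPartition.le_of_le (hpart : IsPartition lam r) {i i' : ℕ} (hi : 1 ≤ i) (hii' : i ≤ i')
    (hi' : i' ≤ r) : lam i' ≤ lam i := by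
  induction i', hii' using Nat.le_induction with
  | base => exact le_rfl
  | succ n hn ih => exact (hpart.1 n (hi.trans hn) hi').trans (ih (by omega))

theorem IsPartition.mem_cells_of_succ_fst (hpart : IsPartition lam r) {i j : ℕ}
    (h : (i + 1, j) ∈ cells lam r) (hi : 1 ≤ i) : (i, j) ∈ cells lam r :=
  ⟨hi, by have := h.2.1; omega, h.2.2.1,
    h.2.2.2.trans (hpart.le_of_le hi (Nat.le_succ i) h.2.1)⟩

theorem mem_cells_of_succ_snd {i j : ℕ} (h : (i, j + 1) ∈ cells lam r) (hj : 1 ≤ j) :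
    (i, j) ∈ cells lam r :=
  ⟨h.1, h.2.1, hj, (Nat.le_succ j).trans h.2.2.2⟩

theorem cells_finite : (cells lam r).Finite := by
  refine ((Set.finite_Icc 1 r).prod (Set.finite_Icc 1 ((Finset.Icc 1 r).sup lam))).subset ?_
  rintro ⟨i, j⟩ ⟨h1, h2, h3, h4⟩
  exact ⟨⟨h1, h2⟩, h3, h4.trans (Finset.le_sup (Finset.mem_Icc.mpr ⟨h1, h2⟩))⟩

theorem RPP_finite {k : ℕ} : (RPP lam r k).Finite :=
  (cells_finite.setOf_bounded_vanishing_off k).subset fun _ hP => ⟨hP.1, hP.2.1⟩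

end Shapes

section PairTableau

variable {lam : ℕ → ℕ} {r k : ℕ} {lo hi : ℕ × ℕ → ℕ}

open Classical in
noncomputable def pairTableau (lam : ℕ → ℕ) (r : ℕ) (lo hi : ℕ × ℕ → ℕ) : ℕ × ℕ → Finset ℕ :=
  fun p => if p ∈ cells lam r then {lo p + p.1, hi p + p.1} else ∅

theorem pairTableau_of_mem {p : ℕ × ℕ} (hp : p ∈ cells lam r) :
    pairTableau lam r lo hi p = {lo p + p.1, hi p + p.1} := by
  simp [pairTableau, hp]

theorem pairTableau_of_not_mem {p : ℕ × ℕ} (hp : p ∉ cells lam r) :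
    pairTableau lam r lo hi p = ∅ := by
  simp [pairTableau, hp]

theorem pairTableau_congr {lo' : ℕ × ℕ → ℕ} (h : ∀ p ∈ cells lam r, lo p = lo' p) :
    pairTableau lam r lo hi = pairTableau lam r lo' hi := by
  funext p
  by_cases hp : p ∈ cells lam r
  · rw [pairTableau_of_mem hp, pairTableau_of_mem hp, h p hp]
  · rw [pairTableau_of_not_mem hp, pairTableau_of_not_mem hp]

theorem eq_and_eq_of_pairTableau_eq {lo' hi' : ℕ × ℕ → ℕ} (hle : ∀ p ∈ cells lam r, lo p ≤ hi p)
    (hle' : ∀ p ∈ cells lam r, lo' p ≤ hi' p)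
    (h : pairTableau lam r lo hi = pairTableau lam r lo' hi') {p : ℕ × ℕ}
    (hp : p ∈ cells lam r) : lo p = lo' p ∧ hi p = hi' p := by
  have hp' := congrFun h p
  rw [pairTableau_of_mem hp, pairTableau_of_mem hp] at hp'
  have := Finset.pair_eq_pair_of_le (Nat.add_le_add_right (hle p hp) _)
    (Nat.add_le_add_right (hle' p hp) _) hp'
  omega

section Cells

variable {p q : ℕ × ℕ}

theorem card_pairTableau_eq_two_iff (hp : p ∈ cells lam r) (hle : lo p ≤ hi p) :
    (pairTableau lam r lo hi p).card = 2 ↔ lo p < hi p := by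
  rw [pairTableau_of_mem hp, Finset.card_pair_eq_two_iff, ne_eq, Nat.add_right_cancel_iff]
  exact hle.lt_iff_ne.symm

theorem card_pairTableau_eq_one_iff (hp : p ∈ cells lam r) (hle : lo p ≤ hi p) :
    (pairTableau lam r lo hi p).card = 1 ↔ lo p = hi p := by
  have h12 := Finset.card_pair_eq_one_or_two (a := lo p + p.1) (b := hi p + p.1)
  rw [← pairTableau_of_mem hp] at h12
  have := card_pairTableau_eq_two_iff hp hle
  omega

theorem forall_mem_pairTableau_flag_iff (hp : p ∈ cells lam r) (hle : lo p ≤ hi p) :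
    (∀ x ∈ pairTableau lam r lo hi p, 1 ≤ x ∧ x ≤ k + p.1) ↔ hi p ≤ k := by
  rw [pairTableau_of_mem hp]
  simp only [Finset.mem_insert, Finset.mem_singleton, forall_eq_or_imp, forall_eq]
  have := hp.1
  omega

theorem forall_mem_pairTableau_le_iff (hp : p ∈ cells lam r) (hq : q ∈ cells lam r)
    (hle : lo p ≤ hi p) (hle' : lo q ≤ hi q) (hpq : p.1 = q.1) :
    (∀ x ∈ pairTableau lam r lo hi p, ∀ y ∈ pairTableau lam r lo hi q, x ≤ y) ↔
      hi p ≤ lo q := by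
  rw [pairTableau_of_mem hp, pairTableau_of_mem hq]
  simp only [Finset.mem_insert, Finset.mem_singleton, forall_eq_or_imp, forall_eq]
  omega

theorem forall_mem_pairTableau_lt_iff (hp : p ∈ cells lam r) (hq : q ∈ cells lam r)
    (hle : lo p ≤ hi p) (hle' : lo q ≤ hi q) (hpq : q.1 = p.1 + 1) :
    (∀ x ∈ pairTableau lam r lo hi p, ∀ y ∈ pairTableau lam r lo hi q, x < y) ↔
      hi p ≤ lo q := by
  rw [pairTableau_of_mem hp, pairTableau_of_mem hq]
  simp only [Finset.mem_insert, Finset.mem_singleton, forall_eq_or_imp, forall_eq]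
  omega

end Cells

theorem pairTableau_mem_BSSYT_iff (hle : ∀ p ∈ cells lam r, lo p ≤ hi p) :
    pairTableau lam r lo hi ∈ BSSYT lam r k ↔
      (∃ B ∈ cells lam r, lo B < hi B ∧ ∀ p ∈ cells lam r, p ≠ B → lo p = hi p) ∧
      (∀ p ∈ cells lam r, hi p ≤ k) ∧
      (∀ i j, (i, j) ∈ cells lam r → (i, j + 1) ∈ cells lam r → hi (i, j) ≤ lo (i, j + 1)) ∧
      (∀ i j, (i, j) ∈ cells lam r → (i + 1, j) ∈ cells lam r → hi (i, j) ≤ lo (i + 1, j)) := by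
  rw [BSSYT, Set.mem_ofPred_eq, and_iff_right fun p hp => pairTableau_of_not_mem hp]
  refine and_congr ?_ (and_congr ?_ (and_congr ?_ ?_))
  · exact exists_congr fun B => and_congr_right fun hB =>
      and_congr (card_pairTableau_eq_two_iff hB (hle B hB)) <| forall₂_congr fun p hp =>
        imp_congr_right fun _ => card_pairTableau_eq_one_iff hp (hle p hp)
  · exact forall₂_congr fun p hp => forall_mem_pairTableau_flag_iff hp (hle p hp)
  · exact forall₄_congr fun i j hc hc' =>
      forall_mem_pairTableau_le_iff hc hc' (hle _ hc) (hle _ hc') rfl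
  · exact forall₄_congr fun i j hc hc' =>
      forall_mem_pairTableau_lt_iff hc hc' (hle _ hc) (hle _ hc') rfl

end PairTableau

section Bijection

variable {lam : ℕ → ℕ} {r k : ℕ} {T : ℕ × ℕ → Finset ℕ}

theorem card_eq_one_or_two_of_mem_BSSYT (hT : T ∈ BSSYT lam r k) {p : ℕ × ℕ}
    (hp : p ∈ cells lam r) : (T p).card = 1 ∨ (T p).card = 2 := by
  obtain ⟨-, ⟨B, -, hB2, hB1⟩, -⟩ := hT
  rcases eq_or_ne p B with rfl | hpB
  · exact Or.inr hB2
  · exact Or.inl (hB1 p hp hpB)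

theorem nonempty_of_mem_BSSYT (hT : T ∈ BSSYT lam r k) {p : ℕ × ℕ} (hp : p ∈ cells lam r) :
    (T p).Nonempty :=
  Finset.card_pos.mp <| by rcases card_eq_one_or_two_of_mem_BSSYT hT hp with h | h <;> omega

theorem fst_le_of_mem_BSSYT (hpart : IsPartition lam r) (hT : T ∈ BSSYT lam r k)
    {p : ℕ × ℕ} (hp : p ∈ cells lam r) {x : ℕ} (hx : x ∈ T p) : p.1 ≤ x := by
  obtain ⟨i, j⟩ := p
  induction i generalizing j x with
  | zero => exact Nat.zero_le x
  | succ n ih =>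
    rcases Nat.eq_zero_or_pos n with rfl | hn
    · exact (hT.2.2.1 _ hp x hx).1
    · have hup := hpart.mem_cells_of_succ_fst hp hn
      obtain ⟨y, hy⟩ := nonempty_of_mem_BSSYT hT hup
      exact (ih _ hup hy).trans_lt (hT.2.2.2.2 n j hup hp y hy x hx)

theorem eq_pairTableau_of_mem_BSSYT (hpart : IsPartition lam r) (hT : T ∈ BSSYT lam r k) :
    T = pairTableau lam r (fun p => sInf (T p : Set ℕ) - p.1)
      (fun p => sSup (T p : Set ℕ) - p.1) := by
  funext p
  by_cases hp : p ∈ cells lam r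
  · rw [pairTableau_of_mem hp]
    have hne : (T p : Set ℕ).Nonempty := Finset.coe_nonempty.mpr (nonempty_of_mem_BSSYT hT hp)
    rw [Nat.sub_add_cancel (fst_le_of_mem_BSSYT hpart hT hp (Nat.sInf_mem hne)),
      Nat.sub_add_cancel (fst_le_of_mem_BSSYT hpart hT hp (Nat.sSup_mem hne (Finset.bddAbove _)))]
    exact Finset.eq_pair_csInf_csSup (card_eq_one_or_two_of_mem_BSSYT hT hp)
  · rw [pairTableau_of_not_mem hp, hT.1 p hp]

def cornerTriples (lam : ℕ → ℕ) (r k : ℕ) : Set ((ℕ × ℕ → ℕ) × ℕ × (ℕ × ℕ)) :=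
  {t | t.1 ∈ RPP lam r k ∧ 1 ≤ t.2.1 ∧ t.2.1 ≤ k ∧
    IsProperOutsideCorner lam r (alphaShape lam r t.1 t.2.1) t.2.2}

/-- Row `i` of `Q` shifted by `i`, with the extra entry `j - 1 + i` in the cell `C = (i, c)`. -/
noncomputable def ofTriple (lam : ℕ → ℕ) (r : ℕ) (t : (ℕ × ℕ → ℕ) × ℕ × (ℕ × ℕ)) :
    ℕ × ℕ → Finset ℕ :=
  pairTableau lam r (Function.update t.1 t.2.2 (t.2.1 - 1)) t.1

theorem mem_cornerTriples {Q : ℕ × ℕ → ℕ} {j : ℕ} {C : ℕ × ℕ} :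
    (Q, j, C) ∈ cornerTriples lam r k ↔ Q ∈ RPP lam r k ∧ 1 ≤ j ∧ j ≤ k ∧
      IsProperOutsideCorner lam r (alphaShape lam r Q j) C :=
  Iff.rfl

section Corner

variable {Q : ℕ × ℕ → ℕ} {j : ℕ}

theorem IsProperOutsideCorner.le_apply {C : ℕ × ℕ}
    (hC : IsProperOutsideCorner lam r (alphaShape lam r Q j) C) : j ≤ Q C :=
  not_lt.mp fun hlt => hC.2.1 ⟨hC.1, hlt⟩

theorem IsProperOutsideCorner.update_le {C : ℕ × ℕ}
    (hC : IsProperOutsideCorner lam r (alphaShape lam r Q j) C) (p : ℕ × ℕ) :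
    Function.update Q C (j - 1) p ≤ Q p := by
  rcases eq_or_ne p C with rfl | hpC
  · have := hC.le_apply
    simp only [Function.update_self]
    omega
  · rw [Function.update_of_ne hpC]

theorem IsProperOutsideCorner.apply_left_lt {i c : ℕ}
    (hC : IsProperOutsideCorner lam r (alphaShape lam r Q j) (i, c + 1)) (hc : 1 ≤ c) :
    Q (i, c) < j :=
  (hC.2.2.2.resolve_right (by omega)).2

theorem IsProperOutsideCorner.apply_up_lt {i c : ℕ}
    (hC : IsProperOutsideCorner lam r (alphaShape lam r Q j) (i + 1, c)) (hi : 1 ≤ i) :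
    Q (i, c) < j :=
  (hC.2.2.1.resolve_right (by omega)).2

end Corner

theorem ofTriple_mem_BSSYT {t : (ℕ × ℕ → ℕ) × ℕ × (ℕ × ℕ)} (ht : t ∈ cornerTriples lam r k) :
    ofTriple lam r t ∈ BSSYT lam r k := by
  obtain ⟨Q, j, C⟩ := t
  obtain ⟨hQ, hj, -, hC⟩ := mem_cornerTriples.mp ht
  have hjC := hC.le_apply
  refine (pairTableau_mem_BSSYT_iff fun p _ => hC.update_le p).mpr
    ⟨⟨C, hC.1, ?_, fun p _ hpC => Function.update_of_ne hpC _ _⟩, hQ.2.1, ?_, ?_⟩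
  · simp only [Function.update_self]
    omega
  · intro i c hc hc'
    by_cases hcC : (i, c + 1) = C
    · subst hcC
      simpa using Nat.le_sub_one_of_lt (hC.apply_left_lt hc.2.2.1)
    · rw [Function.update_of_ne hcC]
      exact hQ.2.2.1 i c hc hc'
  · intro i c hc hc'
    by_cases hcC : (i + 1, c) = C
    · subst hcC
      simpa using Nat.le_sub_one_of_lt (hC.apply_up_lt hc.1)
    · rw [Function.update_of_ne hcC]
      exact hQ.2.2.2 i c hc hc'

theorem ofTriple_injOn : Set.InjOn (ofTriple lam r) (cornerTriples lam r k) := by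
  intro ⟨Q, j, C⟩ ht ⟨Q', j', C'⟩ ht' h
  obtain ⟨hQ, hj, -, hC⟩ := mem_cornerTriples.mp ht
  obtain ⟨hQ', hj', -, hC'⟩ := mem_cornerTriples.mp ht'
  have heq := fun p (hp : p ∈ cells lam r) =>
    eq_and_eq_of_pairTableau_eq (fun p _ => hC.update_le p) (fun p _ => hC'.update_le p) h hp
  obtain rfl : Q = Q' := by
    funext p
    by_cases hp : p ∈ cells lam r
    · exact (heq p hp).2
    · exact (hQ.1 p hp).trans (hQ'.1 p hp).symm
  have hCj := (heq C hC.1).1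
  obtain rfl : C = C' := by
    by_contra hne
    rw [Function.update_self, Function.update_of_ne hne] at hCj
    have := hC.le_apply
    omega
  simp only [Function.update_self] at hCj
  simp only [Prod.mk.injEq, true_and, and_true]
  omega

theorem exists_ofTriple_eq_pairTableau (hpart : IsPartition lam r) {lo hi : ℕ × ℕ → ℕ}
    (hle : ∀ p ∈ cells lam r, lo p ≤ hi p) (hhi : ∀ p ∉ cells lam r, hi p = 0)
    (hT : pairTableau lam r lo hi ∈ BSSYT lam r k) :
    ∃ t ∈ cornerTriples lam r k, ofTriple lam r t = pairTableau lam r lo hi := by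
  obtain ⟨⟨B, hB, hBlt, hBeq⟩, hk, hrow, hcol⟩ := (pairTableau_mem_BSSYT_iff hle).mp hT
  obtain ⟨i, c⟩ := B
  have hRPP : hi ∈ RPP lam r k :=
    ⟨hhi, hk, fun i j hc hc' => (hrow i j hc hc').trans (hle _ hc'),
      fun i j hc hc' => (hcol i j hc hc').trans (hle _ hc')⟩
  have hup : (i - 1, c) ∈ alphaShape lam r hi (lo (i, c) + 1) ∨ i = 1 := by
    obtain ⟨n, rfl⟩ : ∃ n, i = n + 1 := ⟨i - 1, by have := hB.1; omega⟩
    rcases Nat.eq_zero_or_pos n with rfl | hn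
    · exact Or.inr rfl
    · have hcell := hpart.mem_cells_of_succ_fst hB hn
      exact Or.inl ⟨hcell, Nat.lt_succ_of_le (hcol n c hcell hB)⟩
  have hleft : (i, c - 1) ∈ alphaShape lam r hi (lo (i, c) + 1) ∨ c = 1 := by
    obtain ⟨n, rfl⟩ : ∃ n, c = n + 1 := ⟨c - 1, by have := hB.2.2.1; omega⟩
    rcases Nat.eq_zero_or_pos n with rfl | hn
    · exact Or.inr rfl
    · have hcell := mem_cells_of_succ_snd hB hn
      exact Or.inl ⟨hcell, Nat.lt_succ_of_le (hrow i n hcell hB)⟩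
  have hnot : (i, c) ∉ alphaShape lam r hi (lo (i, c) + 1) := fun h => by
    have := h.2
    omega
  refine ⟨(hi, lo (i, c) + 1, (i, c)), mem_cornerTriples.mpr ⟨hRPP, Nat.le_add_left 1 _,
    hBlt.trans_le (hk _ hB), hB, hnot, hup, hleft⟩, pairTableau_congr fun p hp => ?_⟩
  rcases eq_or_ne p (i, c) with rfl | hpB
  · simp
  · rw [Function.update_of_ne hpB, hBeq p hp hpB]

theorem exists_ofTriple_eq (hpart : IsPartition lam r) (hT : T ∈ BSSYT lam r k) :
    ∃ t ∈ cornerTriples lam r k, ofTriple lam r t = T := by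
  have hTeq := eq_pairTableau_of_mem_BSSYT hpart hT
  refine hTeq ▸ exists_ofTriple_eq_pairTableau hpart (fun p hp => ?_) (fun p hp => ?_) (hTeq ▸ hT)
  · have hne : (T p : Set ℕ).Nonempty := Finset.coe_nonempty.mpr (nonempty_of_mem_BSSYT hT hp)
    exact Nat.sub_le_sub_right (csInf_le_csSup hne (Finset.bddBelow _) (Finset.bddAbove _)) _
  · simp [hT.1 p hp]

theorem ncard_cornerTriples :
    (cornerTriples lam r k).ncard = ∑ᶠ Q ∈ RPP lam r k, ∑ j ∈ Finset.Icc 1 k,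
      {p | IsProperOutsideCorner lam r (alphaShape lam r Q j) p}.ncard := by
  have hcorners : ∀ Q j, {p | IsProperOutsideCorner lam r (alphaShape lam r Q j) p}.Finite :=
    fun Q j => cells_finite.subset fun _ hp => hp.1
  have hslice : ∀ Q, {u : ℕ × (ℕ × ℕ) | 1 ≤ u.1 ∧ u.1 ≤ k ∧
      IsProperOutsideCorner lam r (alphaShape lam r Q u.1) u.2} =
      {u | u.1 ∈ (Finset.Icc 1 k : Set ℕ) ∧
        u.2 ∈ {p | IsProperOutsideCorner lam r (alphaShape lam r Q u.1) p}} := by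
    intro Q
    ext u
    simp [and_assoc]
  refine (Set.ncard_setOf_fst_mem_snd_mem (D := fun Q => {u : ℕ × (ℕ × ℕ) | 1 ≤ u.1 ∧ u.1 ≤ k ∧
      IsProperOutsideCorner lam r (alphaShape lam r Q u.1) u.2}) RPP_finite fun Q _ => ?_).trans
    (finsum_mem_congr rfl fun Q _ => ?_)
  · exact ((Set.finite_Icc 1 k).prod cells_finite).subset fun u hu => ⟨⟨hu.1, hu.2.1⟩, hu.2.2.1⟩
  · rw [hslice, Set.ncard_setOf_fst_mem_snd_mem (Finset.finite_toSet _) fun j _ => hcorners Q j,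
      finsum_mem_coe_finset]

end Bijection

theorem bssyt_outside_corner_representation_general (lam : ℕ → ℕ) (r k : ℕ)
    (hpart : IsPartition lam r) :
    Nonempty ((BSSYT lam r k) ≃
      {t : ((ℕ × ℕ) → ℕ) × ℕ × (ℕ × ℕ) //
        t.1 ∈ RPP lam r k ∧ 1 ≤ t.2.1 ∧ t.2.1 ≤ k ∧
        IsProperOutsideCorner lam r (alphaShape lam r t.1 t.2.1) t.2.2}) ∧
    (BSSYT lam r k).ncard =
      ∑ᶠ Q ∈ RPP lam r k, ∑ j ∈ Finset.Icc 1 k,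
        {p | IsProperOutsideCorner lam r (alphaShape lam r Q j) p}.ncard := by
  have hbij : Function.Bijective fun t : cornerTriples lam r k =>
      (⟨ofTriple lam r t, ofTriple_mem_BSSYT t.2⟩ : BSSYT lam r k) :=
    ⟨fun t t' h => Subtype.ext (ofTriple_injOn t.2 t'.2 (congrArg Subtype.val h)),
      fun T => (exists_ofTriple_eq hpart T.2).elim fun t ht => ⟨⟨t, ht.1⟩, Subtype.ext ht.2⟩⟩
  let e := (Equiv.ofBijective _ hbij).symm
  refine ⟨⟨e⟩, ?_⟩
  rw [← Nat.card_coe_set_eq, Nat.card_congr e, Nat.card_coe_set_eq, ncard_cornerTriples]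

/-- Theorem 3.3: `BSSYT(λ,k)` is in bijection with triples `(Q, j, C')`
where `Q ∈ RPP(λ,k)`, `1 ≤ j ≤ k`, and `C'` is a proper outside corner of `α(Q,j)`;
in particular `|BSSYT(λ,k)| = Σ_{Q ∈ RPP(λ,k)} Σ_{j=1}^k #{proper outside corners of α(Q,j)}`. -/
theorem bssyt_outside_corner_representation (lam : ℕ → ℕ) (r k : ℕ)
    (hpart : IsPartition lam r) (hk : 1 ≤ k) :
    Nonempty ((BSSYT lam r k) ≃
      {t : ((ℕ × ℕ) → ℕ) × ℕ × (ℕ × ℕ) //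
        t.1 ∈ RPP lam r k ∧ 1 ≤ t.2.1 ∧ t.2.1 ≤ k ∧
        IsProperOutsideCorner lam r (alphaShape lam r t.1 t.2.1) t.2.2}) ∧
    (BSSYT lam r k).ncard =
      ∑ᶠ Q ∈ RPP lam r k, ∑ j ∈ Finset.Icc 1 k,
        {p | IsProperOutsideCorner lam r (alphaShape lam r Q j) p}.ncard :=
  bssyt_outside_corner_representation_general lam r k hpart
end

section
/- Let λ be a balanced partition with r rows and c columns and let k be a positive integer. Then (r+c) · Σ_{P ∈ RPP(λ,k)} Σ_{i=1}^{k} jag(α(P,i)) = 2·r·c·k·|RPP(λ,k)|; equivalently, the expected jaggedness of a subshape of λ under the weak distribution equals 2rc/(r+c). -/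
open Polynomial

-- ============ my development ============
section Dev

open Finset
open scoped Classical

variable {lam : ℕ → ℕ} {r k : ℕ}

lemma mem_cells {a b : ℕ} : ((a, b) ∈ cells lam r) ↔ (1 ≤ a ∧ a ≤ r ∧ 1 ≤ b ∧ b ≤ lam a) :=
  Iff.rfl

lemma lam_anti (hpart : IsPartition lam r) :
    ∀ i i' : ℕ, 1 ≤ i → i ≤ i' → i' ≤ r → lam i' ≤ lam i := by
  intro i i' hi hii' hr
  induction i' with
  | zero => omega
  | succ n ih =>
    rcases Nat.lt_or_ge i (n + 1) with h | h
    · exact le_trans (hpart.1 n (by omega) (by omega)) (ih (by omega) (by omega))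
    · have : i = n + 1 := by omega
      subst this; exact le_refl _

lemma rpp_row_mono {P : (ℕ × ℕ) → ℕ} (hP : P ∈ RPP lam r k) {i j j' : ℕ}
    (h : (i, j') ∈ cells lam r) (hj : 1 ≤ j) (hjj : j ≤ j') :
    P (i, j) ≤ P (i, j') := by
  induction j' with
  | zero => omega
  | succ n ih =>
    rcases Nat.lt_or_ge j (n + 1) with hlt | hge
    · have h' := mem_cells.mp h
      have hcell : (i, n) ∈ cells lam r := mem_cells.mpr ⟨h'.1, h'.2.1, by omega, by omega⟩
      exact le_trans (ih hcell (by omega)) (hP.2.2.1 i n hcell h)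
    · have : j = n + 1 := by omega
      subst this; exact le_refl _

lemma downclosed_eq_Icc {S : Finset ℕ} {n : ℕ} (hsub : S ⊆ Finset.Icc 1 n)
    (hdc : ∀ a ∈ S, ∀ b, 1 ≤ b → b ≤ a → b ∈ S) : S = Finset.Icc 1 S.card := by
  ext j
  simp only [Finset.mem_Icc]
  constructor
  · intro hj
    have h1 : 1 ≤ j := (Finset.mem_Icc.mp (hsub hj)).1
    refine ⟨h1, ?_⟩
    have hss : Finset.Icc 1 j ⊆ S := fun b hb =>
      hdc j hj b (Finset.mem_Icc.mp hb).1 (Finset.mem_Icc.mp hb).2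
    have := Finset.card_le_card hss
    rw [Nat.card_Icc] at this
    omega
  · rintro ⟨h1, h2⟩
    by_contra hj
    have hS : S ⊆ Finset.Icc 1 (j - 1) := by
      intro a ha
      have h3 := Finset.mem_Icc.mp (hsub ha)
      rw [Finset.mem_Icc]
      refine ⟨h3.1, ?_⟩
      by_contra hcon
      exact hj (hdc a ha j h1 (by omega))
    have := Finset.card_le_card hS
    rw [Nat.card_Icc] at this
    omega

/-- row lengths of `alphaShape lam r P i` -/
noncomputable def mfun (lam : ℕ → ℕ) (r : ℕ) (P : (ℕ × ℕ) → ℕ) (i : ℕ) (row : ℕ) : ℕ :=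
  if 1 ≤ row ∧ row ≤ r then
    ((Finset.Icc 1 (lam row)).filter (fun j => P (row, j) < i)).card else 0

lemma mfun_filter {P : (ℕ × ℕ) → ℕ} (hP : P ∈ RPP lam r k) {i row : ℕ}
    (h1 : 1 ≤ row) (h2 : row ≤ r) :
    (Finset.Icc 1 (lam row)).filter (fun j => P (row, j) < i)
      = Finset.Icc 1 (mfun lam r P i row) := by
  rw [mfun, if_pos ⟨h1, h2⟩]
  apply downclosed_eq_Icc (Finset.filter_subset _ _)
  intro a ha b hb1 hba
  rw [Finset.mem_filter, Finset.mem_Icc] at ha ⊢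
  have hcell : (row, a) ∈ cells lam r := ⟨h1, h2, ha.1.1, ha.1.2⟩
  exact ⟨⟨hb1, le_trans hba ha.1.2⟩,
    lt_of_le_of_lt (rpp_row_mono hP hcell hb1 hba) ha.2⟩

lemma mem_alpha_iff {P : (ℕ × ℕ) → ℕ} (hP : P ∈ RPP lam r k) {i row j : ℕ} :
    (row, j) ∈ alphaShape lam r P i ↔
      1 ≤ row ∧ row ≤ r ∧ 1 ≤ j ∧ j ≤ mfun lam r P i row := by
  constructor
  · rintro ⟨⟨h1, h2, h3, h4⟩, hlt⟩
    refine ⟨h1, h2, h3, ?_⟩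
    have hmem : j ∈ (Finset.Icc 1 (lam row)).filter (fun j => P (row, j) < i) :=
      Finset.mem_filter.mpr ⟨Finset.mem_Icc.mpr ⟨h3, h4⟩, hlt⟩
    rw [mfun_filter hP h1 h2] at hmem
    exact (Finset.mem_Icc.mp hmem).2
  · rintro ⟨h1, h2, h3, h4⟩
    have hmem : j ∈ Finset.Icc 1 (mfun lam r P i row) := Finset.mem_Icc.mpr ⟨h3, h4⟩
    rw [← mfun_filter hP h1 h2] at hmem
    have h5 := Finset.mem_filter.mp hmem
    have h6 := Finset.mem_Icc.mp h5.1
    exact ⟨⟨h1, h2, h6.1, h6.2⟩, h5.2⟩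

lemma mfun_le {P : (ℕ × ℕ) → ℕ} {i row : ℕ} : mfun lam r P i row ≤ lam row := by
  rw [mfun]
  split
  · exact le_trans (Finset.card_filter_le _ _) (by rw [Nat.card_Icc]; omega)
  · exact Nat.zero_le _

lemma mfun_zero {P : (ℕ × ℕ) → ℕ} {i row : ℕ} (h : ¬(1 ≤ row ∧ row ≤ r)) :
    mfun lam r P i row = 0 := by rw [mfun, if_neg h]

lemma mfun_anti (hpart : IsPartition lam r) {P : (ℕ × ℕ) → ℕ} (hP : P ∈ RPP lam r k)
    {i row : ℕ} (h1 : 1 ≤ row) (h2 : row < r) :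
    mfun lam r P i (row + 1) ≤ mfun lam r P i row := by
  rw [mfun, mfun, if_pos ⟨by omega, by omega⟩, if_pos ⟨by omega, by omega⟩]
  apply Finset.card_le_card
  intro j hj
  rw [Finset.mem_filter, Finset.mem_Icc] at hj ⊢
  have hlle : lam (row + 1) ≤ lam row := hpart.1 row h1 (by omega)
  have hc1 : (row, j) ∈ cells lam r := ⟨h1, by omega, hj.1.1, le_trans hj.1.2 hlle⟩
  have hc2 : (row + 1, j) ∈ cells lam r := ⟨by omega, by omega, hj.1.1, hj.1.2⟩
  exact ⟨⟨hj.1.1, le_trans hj.1.2 hlle⟩,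
    lt_of_le_of_lt (hP.2.2.2 row j hc1 hc2) hj.2⟩

lemma corner_iff {P : (ℕ × ℕ) → ℕ} (hP : P ∈ RPP lam r k) {i : ℕ} {u : ℕ × ℕ} :
    IsShapeCorner (alphaShape lam r P i) u ↔
      1 ≤ u.1 ∧ u.1 ≤ r ∧ mfun lam r P i (u.1 + 1) < mfun lam r P i u.1
        ∧ u.2 = mfun lam r P i u.1 := by
  obtain ⟨a, b⟩ := u
  simp only [IsShapeCorner]
  rw [mem_alpha_iff hP, mem_alpha_iff hP, mem_alpha_iff hP]
  constructor
  · rintro ⟨⟨h1, h2, h3, h4⟩, h5, h6⟩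
    have hb : b = mfun lam r P i a := by omega
    refine ⟨h1, h2, ?_, hb⟩
    by_cases har : a + 1 ≤ r
    · have : ¬ (b ≤ mfun lam r P i (a + 1)) := fun hcon => h5 ⟨by omega, har, h3, hcon⟩
      omega
    · rw [mfun_zero (by omega)]
      omega
  · rintro ⟨h1, h2, h3, h4⟩
    subst h4
    exact ⟨⟨h1, h2, by omega, le_refl _⟩, fun hcon => by omega, fun hcon => by omega⟩

lemma outside_iff {P : (ℕ × ℕ) → ℕ} (hP : P ∈ RPP lam r k)
    {i : ℕ} {u : ℕ × ℕ} :
    IsProperOutsideCorner lam r (alphaShape lam r P i) u ↔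
      1 ≤ u.1 ∧ u.1 ≤ r ∧ mfun lam r P i u.1 < lam u.1
        ∧ (u.1 = 1 ∨ mfun lam r P i u.1 < mfun lam r P i (u.1 - 1))
        ∧ u.2 = mfun lam r P i u.1 + 1 := by
  obtain ⟨a, b⟩ := u
  simp only [IsProperOutsideCorner]
  constructor
  · rintro ⟨hcell, h5, h6, h7⟩
    obtain ⟨h1, h2, h3, h4⟩ := mem_cells.mp hcell
    rw [mem_alpha_iff hP] at h5
    simp only [not_and, not_le] at h5
    have hgt : mfun lam r P i a < b := h5 h1 h2 h3
    have hb : b = mfun lam r P i a + 1 := by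
      rcases h7 with h7 | h7
      · rw [mem_alpha_iff hP (row := a) (j := b - 1)] at h7
        omega
      · omega
    refine ⟨h1, h2, by omega, ?_, hb⟩
    rcases h6 with h6 | h6
    · rw [mem_alpha_iff hP (row := a - 1) (j := b)] at h6
      right; omega
    · left; exact h6
  · rintro ⟨h1, h2, h3, h4, h5⟩
    subst h5
    refine ⟨mem_cells.mpr ⟨h1, h2, by omega, by omega⟩, ?_, ?_, ?_⟩
    · rw [mem_alpha_iff hP]; omega
    · rcases h4 with h4 | h4
      · right; exact h4
      · have ha2 : 2 ≤ a := by
          rcases Nat.lt_or_ge a 2 with hcon | hcon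
          · exfalso
            have hzz : mfun lam r P i (a - 1) = 0 := by
              have ha1 : a = 1 := by omega
              rw [ha1]
              exact mfun_zero (by omega)
            omega
          · exact hcon
        left
        rw [mem_alpha_iff hP (row := a - 1) (j := mfun lam r P i a + 1)]
        refine ⟨by omega, by omega, by omega, by omega⟩
    · by_cases hm : mfun lam r P i a = 0
      · right; omega
      · left
        rw [show ((a, mfun lam r P i a + 1 - 1) : ℕ × ℕ) = (a, mfun lam r P i a) by simp]
        rw [mem_alpha_iff hP]
        exact ⟨h1, h2, by omega, le_refl _⟩


/-- Row contribution to the weighted jaggedness identity. -/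
noncomputable def G (lam : ℕ → ℕ) (r : ℕ) (m : ℕ → ℕ) (row : ℕ) : ℤ :=
  (if m (row + 1) < m row then
      ((lam 1 : ℤ) * row + (r : ℤ) * (m row) - (r : ℤ) * (lam 1 : ℤ)) else 0) +
  (if (m row < lam row ∧ (row = 1 ∨ m row < m (row - 1))) then
      ((r : ℤ) + (lam 1 : ℤ) + (r : ℤ) * (lam 1 : ℤ)
        - ((lam 1 : ℤ) * row + (r : ℤ) * (m row) + (r : ℤ))) else 0)

set_option maxHeartbeats 1600000 in
lemma lemmaA (hr : 1 ≤ r) (hpart : IsPartition lam r) (hbal : IsBalanced lam r) :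
    ∀ n (m : ℕ → ℕ), (∑ row ∈ Finset.Icc 1 r, m row) = n →
    (∀ row, 1 ≤ row → row < r → m (row + 1) ≤ m row) →
    (∀ row, 1 ≤ row → row ≤ r → m row ≤ lam row) →
    m (r + 1) = 0 →
    ∑ row ∈ Finset.Icc 1 r, G lam r m row = (r : ℤ) * (lam 1 : ℤ) := by
  intro n
  induction n using Nat.strong_induction_on with
  | _ n ih =>
  intro m hsum ha hb hz
  by_cases hzero : ∀ row ∈ Finset.Icc 1 r, m row = 0
  · -- base case : empty shape
    have hG : ∀ row ∈ Finset.Icc 1 r,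
        G lam r m row = if row = 1 then (r : ℤ) * (lam 1 : ℤ) else 0 := by
      intro row hrow
      rw [Finset.mem_Icc] at hrow
      have hmrow : m row = 0 := hzero row (Finset.mem_Icc.mpr hrow)
      have hm1 : m (row + 1) = 0 := by
        rcases Nat.lt_or_ge row r with h | h
        · exact hzero _ (Finset.mem_Icc.mpr ⟨by omega, by omega⟩)
        · have hrr : row = r := by omega
          rw [hrr]; exact hz
      have hlampos : 1 ≤ lam row := hpart.2 row hrow.1 hrow.2
      rw [G, hmrow, hm1]
      by_cases h1 : row = 1
      · subst h1
        rw [if_neg (by omega), if_pos ⟨by omega, Or.inl rfl⟩, if_pos rfl]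
        push_cast; ring
      · have hm2 : m (row - 1) = 0 := hzero _ (Finset.mem_Icc.mpr ⟨by omega, by omega⟩)
        rw [if_neg (by omega), if_neg (by rw [hm2]; omega), if_neg h1]
        ring
    rw [Finset.sum_congr rfl hG, Finset.sum_ite_eq' (Finset.Icc 1 r) 1
      (fun _ => (r : ℤ) * (lam 1 : ℤ)), if_pos (Finset.mem_Icc.mpr ⟨le_refl _, hr⟩)]
  · -- inductive step
    push_neg at hzero
    obtain ⟨row₀, hrow₀, hm₀⟩ := hzero
    have hSne : ((Finset.Icc 1 r).filter (fun row => 1 ≤ m row)).Nonempty :=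
      ⟨row₀, Finset.mem_filter.mpr ⟨hrow₀, by omega⟩⟩
    obtain ⟨i₀, hi₀S, hi₀max⟩ : ∃ i₀, (i₀ ∈ (Finset.Icc 1 r).filter (fun row => 1 ≤ m row)) ∧
        ∀ x ∈ (Finset.Icc 1 r).filter (fun row => 1 ≤ m row), x ≤ i₀ :=
      ⟨_, Finset.max'_mem _ hSne, fun x hx => Finset.le_max' _ x hx⟩
    rw [Finset.mem_filter, Finset.mem_Icc] at hi₀S
    obtain ⟨⟨hi₀1, hi₀r⟩, hj1⟩ := hi₀S
    have hnext : m (i₀ + 1) = 0 := by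
      rcases Nat.lt_or_ge i₀ r with h | h
      · by_contra hcon
        have hmem : i₀ + 1 ∈ (Finset.Icc 1 r).filter (fun row => 1 ≤ m row) :=
          Finset.mem_filter.mpr ⟨Finset.mem_Icc.mpr ⟨by omega, by omega⟩, by omega⟩
        have := hi₀max _ hmem
        omega
      · have hir : i₀ = r := by omega
        rw [hir]; exact hz
    set m' := Function.update m i₀ (m i₀ - 1) with hm'def
    have hm'i₀ : m' i₀ = m i₀ - 1 := Function.update_self _ _ _
    have hm'ne : ∀ x, x ≠ i₀ → m' x = m x := fun x hx => Function.update_of_ne hx _ _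
    have ha' : ∀ row, 1 ≤ row → row < r → m' (row + 1) ≤ m' row := by
      intro row h1 h2
      rcases eq_or_ne row i₀ with he | he
      · rw [he, hm'i₀, hm'ne _ (by omega), hnext]; omega
      · rcases eq_or_ne (row + 1) i₀ with he2 | he2
        · rw [he2, hm'i₀, hm'ne _ he]
          have h3 := ha row h1 h2
          rw [he2] at h3; omega
        · rw [hm'ne _ he2, hm'ne _ he]; exact ha row h1 h2
    have hb' : ∀ row, 1 ≤ row → row ≤ r → m' row ≤ lam row := by
      intro row h1 h2
      rcases eq_or_ne row i₀ with he | he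
      · rw [he, hm'i₀]
        have := hb i₀ hi₀1 hi₀r; omega
      · rw [hm'ne _ he]; exact hb row h1 h2
    have hz' : m' (r + 1) = 0 := by rw [hm'ne _ (by omega)]; exact hz
    have hsum' : (∑ row ∈ Finset.Icc 1 r, m' row) = n - 1 := by
      have h1 : (∑ row ∈ Finset.Icc 1 r, m' row)
          = m i₀ - 1 + ∑ row ∈ Finset.Icc 1 r \ {i₀}, m row := by
        rw [hm'def]
        exact Finset.sum_update_of_mem (Finset.mem_Icc.mpr ⟨hi₀1, hi₀r⟩) m (m i₀ - 1)
      have h2 : m i₀ + ∑ row ∈ Finset.Icc 1 r \ {i₀}, m row = n := by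
        rw [Finset.sdiff_singleton_eq_erase,
          Finset.add_sum_erase _ m (Finset.mem_Icc.mpr ⟨hi₀1, hi₀r⟩)]
        exact hsum
      omega
    have hn1 : 1 ≤ n := by
      have := Finset.single_le_sum (f := m) (fun x _ => Nat.zero_le _)
        (Finset.mem_Icc.mpr ⟨hi₀1, hi₀r⟩)
      omega
    have IH := ih (n - 1) (by omega) m' hsum' ha' hb' hz'
    -- facts
    have hups : 2 ≤ i₀ → m i₀ ≤ m (i₀ - 1) := by
      intro h2
      have h3 := ha (i₀ - 1) (by omega) (by omega)
      have e1 : i₀ - 1 + 1 = i₀ := by omega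
      rw [e1] at h3; exact h3
    have hjlam : m i₀ ≤ lam i₀ := hb i₀ hi₀1 hi₀r
    have hblam : 2 ≤ i₀ → m (i₀ - 1) ≤ lam (i₀ - 1) := fun h2 => hb _ (by omega) (by omega)
    have hlam1p : 1 ≤ lam 1 := hpart.2 1 (le_refl _) hr
    have hbalC : 2 ≤ i₀ → m i₀ = lam i₀ → m i₀ < m (i₀ - 1) →
        (lam 1 : ℤ) * ((r : ℤ) - (i₀ : ℤ) + 1) = (r : ℤ) * ((m i₀ : ℕ) : ℤ) := by
      intro h2 hm hlt
      have hdesc : lam i₀ < lam (i₀ - 1) := by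
        have := hblam h2; omega
      have e1 : i₀ - 1 + 1 = i₀ := by omega
      have hb2 := hbal (i₀ - 1) (by omega) (by omega) (by rw [e1]; exact hdesc)
      rw [e1] at hb2
      have h9 : ((r - (i₀ - 1) : ℕ) : ℤ) = (r : ℤ) - (i₀ : ℤ) + 1 := by omega
      have h10 : ((lam 1 : ℕ) : ℤ) * ((r - (i₀ - 1) : ℕ) : ℤ) = (r : ℤ) * ((lam i₀ : ℕ) : ℤ) := by
        exact_mod_cast hb2
      rw [h9] at h10
      rw [show ((m i₀ : ℕ) : ℤ) = ((lam i₀ : ℕ) : ℤ) by rw [hm]]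
      exact h10
    have c2 : ((m i₀ - 1 : ℕ) : ℤ) = ((m i₀ : ℕ) : ℤ) - 1 := by omega
    -- key step: sums agree
    have hdiff0 : ∀ row ∈ Finset.Icc 1 r, row ∉ ({i₀ - 1, i₀, i₀ + 1} : Finset ℕ) →
        G lam r m row = G lam r m' row := by
      intro row hrow hnot
      simp only [Finset.mem_insert, Finset.mem_singleton] at hnot
      push_neg at hnot
      rw [Finset.mem_Icc] at hrow
      rw [G, G, hm'ne (row + 1) (by omega), hm'ne row (by omega), hm'ne (row - 1) (by omega)]
    have hsplit : ∑ row ∈ Finset.Icc 1 r, (G lam r m row - G lam r m' row)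
        = ∑ row ∈ (Finset.Icc 1 r) ∩ {i₀ - 1, i₀, i₀ + 1},
            (G lam r m row - G lam r m' row) := by
      symm
      apply Finset.sum_subset Finset.inter_subset_left
      intro x hx hx2
      have hxn : x ∉ ({i₀ - 1, i₀, i₀ + 1} : Finset ℕ) := fun hc =>
        hx2 (Finset.mem_inter.mpr ⟨hx, hc⟩)
      rw [hdiff0 x hx hxn]; ring
    have hzero3 : ∑ row ∈ (Finset.Icc 1 r) ∩ {i₀ - 1, i₀, i₀ + 1},
        (G lam r m row - G lam r m' row) = 0 := by
      rcases Nat.lt_or_ge i₀ 2 with hi2 | hi2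
      · -- i₀ = 1
        have hi1 : i₀ = 1 := by omega
        subst hi1
        rcases Nat.lt_or_ge 1 r with hir | hir
        · -- scenario B : 1 = i₀ < r
          have hT : (Finset.Icc 1 r) ∩ {1 - 1, 1, 1 + 1} = {1, 1 + 1} := by
            ext x
            simp only [Finset.mem_inter, Finset.mem_Icc, Finset.mem_insert,
              Finset.mem_singleton]
            omega
          rw [hT, Finset.sum_insert (by simp only [Finset.mem_singleton]; omega),
            Finset.sum_singleton]
          simp only [G]
          rw [show (1 : ℕ) + 1 - 1 = 1 from rfl]
          rw [hm'i₀, hm'ne (1 + 1) (by omega), hm'ne (1 + 1 + 1) (by omega),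
            hm'ne (1 - 1) (by omega), hnext]
          have hl2 : 1 ≤ lam (1 + 1) := hpart.2 _ (by omega) (by omega)
          try simp only [true_or, and_true]
          rw [if_pos (show 0 < m 1 by omega)]
          rw [if_pos (show m 1 - 1 < lam 1 by omega)]
          rw [if_neg (show ¬ (m (1 + 1 + 1) < 0) by omega)]
          rw [if_pos (show 0 < lam (1 + 1) ∧ (1 + 1 = 1 ∨ 0 < m 1) from
            ⟨by omega, Or.inr (by omega)⟩)]
          by_cases hJ : 2 ≤ m 1
          · rw [if_pos (show 0 < m 1 - 1 by omega),
              if_pos (show 0 < lam (1 + 1) ∧ (1 + 1 = 1 ∨ 0 < m 1 - 1) from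
                ⟨by omega, Or.inr (by omega)⟩)]
            by_cases hD : m 1 < lam 1
            · rw [if_pos hD]; simp only [c2]; push_cast; linarith
            · rw [if_neg hD]
              have hq2 : (r : ℤ) * ((m 1 : ℕ) : ℤ) = (r : ℤ) * ((lam 1 : ℕ) : ℤ) := by
                rw [show ((m 1 : ℕ) : ℤ) = ((lam 1 : ℕ) : ℤ) by omega]
              simp only [c2]; push_cast; linarith [hq2]
          · rw [if_neg (show ¬ (0 < m 1 - 1) by omega),
              if_neg (show ¬ (0 < lam (1 + 1) ∧ (1 + 1 = 1 ∨ 0 < m 1 - 1)) from by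
                rintro ⟨-, h | h⟩ <;> omega)]
            have hrq : (r : ℤ) * ((m 1 : ℕ) : ℤ) = (r : ℤ) := by
              rw [show ((m 1 : ℕ) : ℤ) = 1 by omega, mul_one]
            by_cases hD : m 1 < lam 1
            · rw [if_pos hD]; simp only [c2]; push_cast; linarith [hrq]
            · rw [if_neg hD]
              have hq2 : (r : ℤ) * ((m 1 : ℕ) : ℤ) = (r : ℤ) * ((lam 1 : ℕ) : ℤ) := by
                rw [show ((m 1 : ℕ) : ℤ) = ((lam 1 : ℕ) : ℤ) by omega]
              simp only [c2]; push_cast; linarith [hq2, hrq]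
        · -- scenario A : i₀ = 1 = r
          have hr1 : r = 1 := by omega
          subst hr1
          have hT : (Finset.Icc 1 1) ∩ {1 - 1, 1, 1 + 1} = {1} := by
            ext x
            simp only [Finset.mem_inter, Finset.mem_Icc, Finset.mem_insert,
              Finset.mem_singleton]
            omega
          rw [hT, Finset.sum_singleton]
          simp only [G]
          rw [hm'i₀, hm'ne (1 + 1) (by omega), hm'ne (1 - 1) (by omega), hnext]
          try simp only [true_or, and_true]
          rw [if_pos (show 0 < m 1 by omega)]
          rw [if_pos (show m 1 - 1 < lam 1 by omega)]
          by_cases hJ : 2 ≤ m 1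
          · rw [if_pos (show 0 < m 1 - 1 by omega)]
            by_cases hD : m 1 < lam 1
            · rw [if_pos hD]; simp only [c2]; push_cast; linarith
            · rw [if_neg hD]
              have hq2 : ((m 1 : ℕ) : ℤ) = ((lam 1 : ℕ) : ℤ) := by omega
              simp only [c2]; push_cast; linarith [hq2]
          · rw [if_neg (show ¬ (0 < m 1 - 1) by omega)]
            have hrq : ((m 1 : ℕ) : ℤ) = 1 := by omega
            by_cases hD : m 1 < lam 1
            · rw [if_pos hD]; simp only [c2]; push_cast; linarith [hrq]
            · rw [if_neg hD]
              have hq2 : ((m 1 : ℕ) : ℤ) = ((lam 1 : ℕ) : ℤ) := by omega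
              simp only [c2]; push_cast; linarith [hq2, hrq]
      · -- 2 ≤ i₀
        have hup2 : m i₀ ≤ m (i₀ - 1) := hups hi2
        have c1 : ((i₀ - 1 : ℕ) : ℤ) = (i₀ : ℤ) - 1 := by omega
        rcases Nat.lt_or_ge i₀ r with hir | hir
        · -- scenario D : 2 ≤ i₀ < r
          have hT : (Finset.Icc 1 r) ∩ {i₀ - 1, i₀, i₀ + 1} = {i₀ - 1, i₀, i₀ + 1} := by
            ext x
            simp only [Finset.mem_inter, Finset.mem_Icc, Finset.mem_insert,
              Finset.mem_singleton]
            omega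
          rw [hT,
            Finset.sum_insert (by simp only [Finset.mem_insert, Finset.mem_singleton]; omega),
            Finset.sum_insert (by simp only [Finset.mem_singleton]; omega),
            Finset.sum_singleton]
          simp only [G]
          have e1 : i₀ - 1 + 1 = i₀ := by omega
          have e2 : i₀ + 1 - 1 = i₀ := by omega
          rw [e1, e2]
          rw [hm'i₀, hm'ne (i₀ - 1) (by omega), hm'ne (i₀ + 1) (by omega),
            hm'ne (i₀ - 1 - 1) (by omega), hm'ne (i₀ + 1 + 1) (by omega), hnext]
          have hl3 : 1 ≤ lam (i₀ + 1) := hpart.2 _ (by omega) (by omega)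
          rw [if_pos (show 0 < m i₀ by omega)]
          rw [if_pos (show m i₀ - 1 < m (i₀ - 1) by omega)]
          rw [if_pos (show m i₀ - 1 < lam i₀ ∧ (i₀ = 1 ∨ m i₀ - 1 < m (i₀ - 1)) from
            ⟨by omega, Or.inr (by omega)⟩)]
          rw [if_neg (show ¬ (m (i₀ + 1 + 1) < 0) by omega)]
          rw [if_pos (show 0 < lam (i₀ + 1) ∧ (i₀ + 1 = 1 ∨ 0 < m i₀) from
            ⟨by omega, Or.inr (by omega)⟩)]
          by_cases hJ : 2 ≤ m i₀
          all_goals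
            first
            | (rw [if_pos (show 0 < m i₀ - 1 by omega),
                if_pos (show 0 < lam (i₀ + 1) ∧ (i₀ + 1 = 1 ∨ 0 < m i₀ - 1) from
                  ⟨by omega, Or.inr (by omega)⟩)]
               have hrq : (0 : ℤ) = 0 := rfl)
            | (rw [if_neg (show ¬ (0 < m i₀ - 1) by omega),
                if_neg (show ¬ (0 < lam (i₀ + 1) ∧ (i₀ + 1 = 1 ∨ 0 < m i₀ - 1)) from by
                  rintro ⟨-, h | h⟩ <;> omega)]
               have hrq : (r : ℤ) * ((m i₀ : ℕ) : ℤ) = (r : ℤ) := by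
                 rw [show ((m i₀ : ℕ) : ℤ) = 1 by omega, mul_one])
          all_goals by_cases hB : m i₀ < m (i₀ - 1)
          · -- hJ, hB
            rw [if_pos hB]
            by_cases hD : m i₀ < lam i₀
            · rw [if_pos (show m i₀ < lam i₀ ∧ (i₀ = 1 ∨ m i₀ < m (i₀ - 1)) from
                ⟨hD, Or.inr hB⟩)]
              simp only [c1, c2]; push_cast; linarith [hrq]
            · rw [if_neg (show ¬ (m i₀ < lam i₀ ∧ (i₀ = 1 ∨ m i₀ < m (i₀ - 1))) from
                fun hcc => hD hcc.1)]
              have hbalE := hbalC hi2 (by omega) hB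
              simp only [c1, c2]; push_cast; linarith [hbalE, hrq]
          · -- hJ, ¬hB
            rw [if_neg hB,
              if_neg (show ¬ (m i₀ < lam i₀ ∧ (i₀ = 1 ∨ m i₀ < m (i₀ - 1))) from by
                rintro ⟨-, h | h⟩ <;> omega)]
            have hq : (r : ℤ) * ((m (i₀ - 1) : ℕ) : ℤ) = (r : ℤ) * ((m i₀ : ℕ) : ℤ) := by
              rw [show ((m (i₀ - 1) : ℕ) : ℤ) = ((m i₀ : ℕ) : ℤ) by omega]
            simp only [c1, c2]; push_cast; linarith [hq, hrq]
          · -- ¬hJ, hB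
            rw [if_pos hB]
            by_cases hD : m i₀ < lam i₀
            · rw [if_pos (show m i₀ < lam i₀ ∧ (i₀ = 1 ∨ m i₀ < m (i₀ - 1)) from
                ⟨hD, Or.inr hB⟩)]
              simp only [c1, c2]; push_cast; linarith [hrq]
            · rw [if_neg (show ¬ (m i₀ < lam i₀ ∧ (i₀ = 1 ∨ m i₀ < m (i₀ - 1))) from
                fun hcc => hD hcc.1)]
              have hbalE := hbalC hi2 (by omega) hB
              simp only [c1, c2]; push_cast; linarith [hbalE, hrq]
          · -- ¬hJ, ¬hB
            rw [if_neg hB,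
              if_neg (show ¬ (m i₀ < lam i₀ ∧ (i₀ = 1 ∨ m i₀ < m (i₀ - 1))) from by
                rintro ⟨-, h | h⟩ <;> omega)]
            have hq : (r : ℤ) * ((m (i₀ - 1) : ℕ) : ℤ) = (r : ℤ) * ((m i₀ : ℕ) : ℤ) := by
              rw [show ((m (i₀ - 1) : ℕ) : ℤ) = ((m i₀ : ℕ) : ℤ) by omega]
            simp only [c1, c2]; push_cast; linarith [hq, hrq]
        · -- scenario C : 2 ≤ i₀ = r
          have hirr : i₀ = r := by omega
          subst hirr
          have hT : (Finset.Icc 1 i₀) ∩ {i₀ - 1, i₀, i₀ + 1} = {i₀ - 1, i₀} := by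
            ext x
            simp only [Finset.mem_inter, Finset.mem_Icc, Finset.mem_insert,
              Finset.mem_singleton]
            omega
          rw [hT, Finset.sum_insert (by simp only [Finset.mem_singleton]; omega),
            Finset.sum_singleton]
          simp only [G]
          have e1 : i₀ - 1 + 1 = i₀ := by omega
          rw [e1]
          rw [hm'i₀, hm'ne (i₀ - 1) (by omega), hm'ne (i₀ + 1) (by omega),
            hm'ne (i₀ - 1 - 1) (by omega), hnext]
          rw [if_pos (show 0 < m i₀ by omega)]
          rw [if_pos (show m i₀ - 1 < m (i₀ - 1) by omega)]
          rw [if_pos (show m i₀ - 1 < lam i₀ ∧ (i₀ = 1 ∨ m i₀ - 1 < m (i₀ - 1)) from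
            ⟨by omega, Or.inr (by omega)⟩)]
          by_cases hJ : 2 ≤ m i₀
          all_goals
            first
            | (rw [if_pos (show 0 < m i₀ - 1 by omega)]
               have hrq : (0 : ℤ) = 0 := rfl)
            | (rw [if_neg (show ¬ (0 < m i₀ - 1) by omega)]
               have hrq : (i₀ : ℤ) * ((m i₀ : ℕ) : ℤ) = (i₀ : ℤ) := by
                 rw [show ((m i₀ : ℕ) : ℤ) = 1 by omega, mul_one])
          all_goals by_cases hB : m i₀ < m (i₀ - 1)
          · rw [if_pos hB]
            by_cases hD : m i₀ < lam i₀
            · rw [if_pos (show m i₀ < lam i₀ ∧ (i₀ = 1 ∨ m i₀ < m (i₀ - 1)) from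
                ⟨hD, Or.inr hB⟩)]
              simp only [c1, c2]; push_cast; linarith [hrq]
            · rw [if_neg (show ¬ (m i₀ < lam i₀ ∧ (i₀ = 1 ∨ m i₀ < m (i₀ - 1))) from
                fun hcc => hD hcc.1)]
              have hbalE := hbalC hi2 (by omega) hB
              simp only [c1, c2]; push_cast; linarith [hbalE, hrq]
          · rw [if_neg hB,
              if_neg (show ¬ (m i₀ < lam i₀ ∧ (i₀ = 1 ∨ m i₀ < m (i₀ - 1))) from by
                rintro ⟨-, h | h⟩ <;> omega)]
            have hq : (i₀ : ℤ) * ((m (i₀ - 1) : ℕ) : ℤ) = (i₀ : ℤ) * ((m i₀ : ℕ) : ℤ) := by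
              rw [show ((m (i₀ - 1) : ℕ) : ℤ) = ((m i₀ : ℕ) : ℤ) by omega]
            simp only [c1, c2]; push_cast; linarith [hq, hrq]
          · rw [if_pos hB]
            by_cases hD : m i₀ < lam i₀
            · rw [if_pos (show m i₀ < lam i₀ ∧ (i₀ = 1 ∨ m i₀ < m (i₀ - 1)) from
                ⟨hD, Or.inr hB⟩)]
              simp only [c1, c2]; push_cast; linarith [hrq]
            · rw [if_neg (show ¬ (m i₀ < lam i₀ ∧ (i₀ = 1 ∨ m i₀ < m (i₀ - 1))) from
                fun hcc => hD hcc.1)]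
              have hbalE := hbalC hi2 (by omega) hB
              simp only [c1, c2]; push_cast; linarith [hbalE, hrq]
          · rw [if_neg hB,
              if_neg (show ¬ (m i₀ < lam i₀ ∧ (i₀ = 1 ∨ m i₀ < m (i₀ - 1))) from by
                rintro ⟨-, h | h⟩ <;> omega)]
            have hq : (i₀ : ℤ) * ((m (i₀ - 1) : ℕ) : ℤ) = (i₀ : ℤ) * ((m i₀ : ℕ) : ℤ) := by
              rw [show ((m (i₀ - 1) : ℕ) : ℤ) = ((m i₀ : ℕ) : ℤ) by omega]
            simp only [c1, c2]; push_cast; linarith [hq, hrq]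
    have hfinal : ∑ row ∈ Finset.Icc 1 r, G lam r m row
        = ∑ row ∈ Finset.Icc 1 r, G lam r m' row := by
      have := Finset.sum_sub_distrib (s := Finset.Icc 1 r)
        (f := G lam r m) (g := G lam r m')
      rw [hsplit, hzero3] at this
      linarith
    rw [hfinal, IH]

lemma cells_subset_box (hpart : IsPartition lam r) {p : ℕ × ℕ} (hp : p ∈ cells lam r) :
    p ∈ (Finset.Icc 1 r) ×ˢ (Finset.Icc 1 (lam 1)) := by
  obtain ⟨a, b⟩ := p
  obtain ⟨h1, h2, h3, h4⟩ := mem_cells.mp hp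
  have := lam_anti hpart 1 a (le_refl _) h1 h2
  simp only [Finset.mem_product, Finset.mem_Icc]
  omega

lemma rpp_finite (hpart : IsPartition lam r) : (RPP lam r k).Finite := by
  classical
  have hinj : Set.InjOn
      (fun P => (fun q : ↥((Finset.Icc 1 r) ×ˢ (Finset.Icc 1 (lam 1))) => P q.1))
      (RPP lam r k) := by
    intro P hP Q hQ h
    funext p
    by_cases hp : p ∈ cells lam r
    · exact congrFun h ⟨p, cells_subset_box hpart hp⟩
    · rw [hP.1 p hp, hQ.1 p hp]
  apply Set.Finite.of_finite_image _ hinj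
  apply Set.Finite.subset (Set.Finite.pi (fun _ => Set.finite_Iic k))
  rintro g ⟨P, hP, rfl⟩
  rw [Set.mem_pi]
  intro q _
  show P (q : ℕ × ℕ) ∈ Set.Iic k
  by_cases hq : (q : ℕ × ℕ) ∈ cells lam r
  · exact hP.2.1 _ hq
  · rw [Set.mem_Iic, hP.1 _ hq]; exact Nat.zero_le _

/-- max of the up/left neighbours of `u` in `P` (0 if absent). -/
def mlow (P : (ℕ × ℕ) → ℕ) (u : ℕ × ℕ) : ℕ :=
  max (if 2 ≤ u.1 then P (u.1 - 1, u.2) else 0) (if 2 ≤ u.2 then P (u.1, u.2 - 1) else 0)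

/-- min of `k` and the down/right neighbours of `u` in `P` (when present). -/
def mhigh (lam : ℕ → ℕ) (r k : ℕ) (P : (ℕ × ℕ) → ℕ) (u : ℕ × ℕ) : ℕ :=
  min (min k (if u.1 + 1 ≤ r ∧ u.2 ≤ lam (u.1 + 1) then P (u.1 + 1, u.2) else k))
      (if u.2 + 1 ≤ lam u.1 then P (u.1, u.2 + 1) else k)

lemma mlow_le {P : (ℕ × ℕ) → ℕ} (hP : P ∈ RPP lam r k) (hpart : IsPartition lam r)
    {u : ℕ × ℕ} (hu : u ∈ cells lam r) : mlow P u ≤ P u := by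
  obtain ⟨a, b⟩ := u
  obtain ⟨h1, h2, h3, h4⟩ := mem_cells.mp hu
  rw [mlow]
  apply max_le
  · split
    · rename_i h5
      have hc1 : (a - 1, b) ∈ cells lam r := mem_cells.mpr
        ⟨by omega, by omega, h3, le_trans h4 (lam_anti hpart (a - 1) a (by omega) (by omega) h2)⟩
      have := hP.2.2.2 (a - 1) b hc1 (by rw [show a - 1 + 1 = a by omega]; exact hu)
      rw [show a - 1 + 1 = a by omega] at this
      exact this
    · exact Nat.zero_le _
  · split
    · rename_i h5
      have hc1 : (a, b - 1) ∈ cells lam r := mem_cells.mpr ⟨h1, h2, by omega, by omega⟩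
      have := hP.2.2.1 a (b - 1) hc1 (by rw [show b - 1 + 1 = b by omega]; exact hu)
      rw [show b - 1 + 1 = b by omega] at this
      exact this
    · exact Nat.zero_le _

lemma le_mhigh {P : (ℕ × ℕ) → ℕ} (hP : P ∈ RPP lam r k)
    {u : ℕ × ℕ} (hu : u ∈ cells lam r) : P u ≤ mhigh lam r k P u := by
  obtain ⟨a, b⟩ := u
  obtain ⟨h1, h2, h3, h4⟩ := mem_cells.mp hu
  rw [mhigh]
  apply le_min
  · apply le_min (hP.2.1 _ hu)
    split
    · rename_i h5
      exact hP.2.2.2 a b hu (mem_cells.mpr ⟨by omega, h5.1, h3, h5.2⟩)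
    · exact hP.2.1 _ hu
  · split
    · rename_i h5
      exact hP.2.2.1 a b hu (mem_cells.mpr ⟨h1, h2, by omega, h5⟩)
    · exact hP.2.1 _ hu

lemma outcount_eq {P : (ℕ × ℕ) → ℕ} (hP : P ∈ RPP lam r k)
    {u : ℕ × ℕ} (hu : u ∈ cells lam r) :
    (Finset.Icc 1 k).filter (fun i => IsShapeCorner (alphaShape lam r P i) u)
      = Finset.Ioc (P u) (mhigh lam r k P u) := by
  obtain ⟨a, b⟩ := u
  obtain ⟨h1, h2, h3, h4⟩ := mem_cells.mp hu
  ext i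
  rw [Finset.mem_filter, Finset.mem_Icc, Finset.mem_Ioc]
  constructor
  · rintro ⟨⟨hi1, hik⟩, ⟨hmem, hdown, hright⟩⟩
    refine ⟨hmem.2, ?_⟩
    rw [mhigh]
    refine le_min (le_min hik ?_) ?_
    · split
      · rename_i h5
        by_contra hcon
        exact hdown ⟨mem_cells.mpr ⟨by omega, h5.1, h3, h5.2⟩, by omega⟩
      · exact hik
    · split
      · rename_i h5
        by_contra hcon
        exact hright ⟨mem_cells.mpr ⟨h1, h2, by omega, h5⟩, by omega⟩
      · exact hik
  · rintro ⟨hgt, hle⟩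
    rw [mhigh] at hle
    simp only [le_min_iff] at hle
    refine ⟨⟨by omega, hle.1.1⟩, ⟨⟨hu, hgt⟩, ?_, ?_⟩⟩
    · rintro ⟨hc, hlt⟩
      have hlt' : P (a + 1, b) < i := hlt
      obtain ⟨g1, g2, g3, g4⟩ := mem_cells.mp hc
      have g2' : a + 1 ≤ r := g2
      have g4' : b ≤ lam (a + 1) := g4
      have h5 := hle.1.2
      rw [if_pos ⟨g2', g4'⟩] at h5
      omega
    · rintro ⟨hc, hlt⟩
      have hlt' : P (a, b + 1) < i := hlt
      obtain ⟨g1, g2, g3, g4⟩ := mem_cells.mp hc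
      have g4' : b + 1 ≤ lam a := g4
      have h5 := hle.2
      rw [if_pos g4'] at h5
      omega

lemma incount_eq (hpart : IsPartition lam r) {P : (ℕ × ℕ) → ℕ} (hP : P ∈ RPP lam r k)
    {u : ℕ × ℕ} (hu : u ∈ cells lam r) :
    (Finset.Icc 1 k).filter (fun i => IsProperOutsideCorner lam r (alphaShape lam r P i) u)
      = Finset.Ioc (mlow P u) (P u) := by
  obtain ⟨a, b⟩ := u
  obtain ⟨h1, h2, h3, h4⟩ := mem_cells.mp hu
  have hk := hP.2.1 _ hu
  ext i
  rw [Finset.mem_filter, Finset.mem_Icc, Finset.mem_Ioc]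
  constructor
  · rintro ⟨⟨hi1, hik⟩, ⟨-, hnot, hup, hleft⟩⟩
    have hPi : i ≤ P (a, b) := by
      by_contra hcon
      exact hnot ⟨hu, by omega⟩
    refine ⟨?_, hPi⟩
    rw [mlow]
    simp only [max_lt_iff]
    constructor
    · split
      · rename_i h5
        rcases hup with hup | hup
        · exact hup.2
        · omega
      · omega
    · split
      · rename_i h5
        rcases hleft with hleft | hleft
        · exact hleft.2
        · omega
      · omega
  · rintro ⟨hgt, hle⟩
    rw [mlow] at hgt
    simp only [max_lt_iff] at hgt
    refine ⟨⟨by omega, by omega⟩, hu, (by rintro ⟨-, hlt⟩; omega), ?_, ?_⟩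
    · rcases Nat.lt_or_ge a 2 with h5 | h5
      · right; show a = 1; omega
      · left
        have hmm : (a - 1, b) ∈ alphaShape lam r P i := ⟨mem_cells.mpr ⟨by omega, by omega, h3,
          le_trans h4 (lam_anti hpart (a - 1) a (by omega) (by omega) h2)⟩, by
            rw [if_pos h5] at hgt; exact hgt.1⟩
        exact hmm
    · rcases Nat.lt_or_ge b 2 with h5 | h5
      · right; show b = 1; omega
      · left
        have hmm : (a, b - 1) ∈ alphaShape lam r P i := ⟨mem_cells.mpr ⟨h1, h2, by omega, by omega⟩, by
            rw [if_pos h5] at hgt; exact hgt.2⟩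
        exact hmm

lemma sigma_mem (hpart : IsPartition lam r) {P : (ℕ × ℕ) → ℕ} (hP : P ∈ RPP lam r k)
    {u : ℕ × ℕ} (hu : u ∈ cells lam r) :
    Function.update P u (mlow P u + mhigh lam r k P u - P u) ∈ RPP lam r k := by
  obtain ⟨a, b⟩ := u
  obtain ⟨h1, h2, h3, h4⟩ := mem_cells.mp hu
  have hlo := mlow_le hP hpart hu
  have hhi := le_mhigh hP hu
  have hkk : mhigh lam r k P (a, b) ≤ k := le_trans (min_le_left _ _) (min_le_left _ _)
  set v := mlow P (a, b) + mhigh lam r k P (a, b) - P (a, b) with hv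
  have hv1 : mlow P (a, b) ≤ v := by omega
  have hv2 : v ≤ mhigh lam r k P (a, b) := by omega
  refine ⟨?_, ?_, ?_, ?_⟩
  · intro p hp
    rw [Function.update_of_ne (by rintro rfl; exact hp hu)]
    exact hP.1 p hp
  · intro p hp
    rcases eq_or_ne p (a, b) with rfl | hne
    · rw [Function.update_self]; omega
    · rw [Function.update_of_ne hne]; exact hP.2.1 p hp
  · intro x y hc1 hc2
    rcases eq_or_ne ((x, y) : ℕ × ℕ) (a, b) with heq | hne
    · injection heq with hx hy
      subst hx; subst hy
      rw [Function.update_self,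
        Function.update_of_ne (by intro h; injection h with h5 h6; omega)]
      have g4 : y + 1 ≤ lam x := (mem_cells.mp hc2).2.2.2
      have : mhigh lam r k P (x, y) ≤ P (x, y + 1) := by
        rw [mhigh, if_pos g4]
        exact min_le_right _ _
      omega
    · rcases eq_or_ne ((x, y + 1) : ℕ × ℕ) (a, b) with heq2 | hne2
      · injection heq2 with hx hy
        subst hx
        rw [Function.update_of_ne hne, hy, Function.update_self]
        have hy1 : 1 ≤ y := (mem_cells.mp hc1).2.2.1
        have : P (x, y) ≤ mlow P (x, b) := by
          rw [mlow]
          refine le_trans ?_ (le_max_right _ _)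
          rw [if_pos (show 2 ≤ b by omega), show b - 1 = y by omega]
        omega
      · rw [Function.update_of_ne hne, Function.update_of_ne hne2]
        exact hP.2.2.1 x y hc1 hc2
  · intro x y hc1 hc2
    rcases eq_or_ne ((x, y) : ℕ × ℕ) (a, b) with heq | hne
    · injection heq with hx hy
      subst hx; subst hy
      rw [Function.update_self,
        Function.update_of_ne (by intro h; injection h with h5 h6; omega)]
      have g2 : x + 1 ≤ r := (mem_cells.mp hc2).2.1
      have g4 : y ≤ lam (x + 1) := (mem_cells.mp hc2).2.2.2
      have : mhigh lam r k P (x, y) ≤ P (x + 1, y) := by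
        rw [mhigh, if_pos ⟨g2, g4⟩]
        exact le_trans (min_le_left _ _) (min_le_right _ _)
      omega
    · rcases eq_or_ne ((x + 1, y) : ℕ × ℕ) (a, b) with heq2 | hne2
      · injection heq2 with hx hy
        subst hy
        rw [Function.update_of_ne hne, hx, Function.update_self]
        have hx1 : 1 ≤ x := (mem_cells.mp hc1).1
        have : P (x, y) ≤ mlow P (a, y) := by
          rw [mlow]
          refine le_trans ?_ (le_max_left _ _)
          rw [if_pos (show 2 ≤ a by omega), show a - 1 = x by omega]
        omega
      · rw [Function.update_of_ne hne, Function.update_of_ne hne2]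
        exact hP.2.2.2 x y hc1 hc2

lemma mlow_update {P : (ℕ × ℕ) → ℕ} {u : ℕ × ℕ} (hu : u ∈ cells lam r) (v : ℕ) :
    mlow (Function.update P u v) u = mlow P u := by
  obtain ⟨a, b⟩ := u
  obtain ⟨h1, h2, h3, h4⟩ := mem_cells.mp hu
  rw [mlow, mlow,
    Function.update_of_ne (by intro h; injection h with h5 h6; omega),
    Function.update_of_ne (by intro h; injection h with h5 h6; omega)]

lemma mhigh_update {P : (ℕ × ℕ) → ℕ} {u : ℕ × ℕ} (hu : u ∈ cells lam r) (v : ℕ) :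
    mhigh lam r k (Function.update P u v) u = mhigh lam r k P u := by
  obtain ⟨a, b⟩ := u
  rw [mhigh, mhigh,
    Function.update_of_ne (by intro h; injection h with h5 h6; omega),
    Function.update_of_ne (by intro h; injection h with h5 h6; omega)]

lemma toggle_sum (hpart : IsPartition lam r) (hfin : (RPP lam r k).Finite)
    {u : ℕ × ℕ} (hu : u ∈ cells lam r) :
    ∑ P ∈ hfin.toFinset,
      ((Finset.Icc 1 k).filter (fun i => IsShapeCorner (alphaShape lam r P i) u)).card
    = ∑ P ∈ hfin.toFinset,
      ((Finset.Icc 1 k).filter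
        (fun i => IsProperOutsideCorner lam r (alphaShape lam r P i) u)).card := by
  classical
  have hmemtf : ∀ Q : (ℕ × ℕ) → ℕ, Q ∈ hfin.toFinset ↔ Q ∈ RPP lam r k := fun Q =>
    Set.Finite.mem_toFinset hfin
  refine Finset.sum_nbij'
    (i := fun P => Function.update P u (mlow P u + mhigh lam r k P u - P u))
    (j := fun P => Function.update P u (mlow P u + mhigh lam r k P u - P u))
    (fun P hP => (hmemtf _).mpr (sigma_mem hpart ((hmemtf _).mp hP) hu))
    (fun P hP => (hmemtf _).mpr (sigma_mem hpart ((hmemtf _).mp hP) hu))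
    ?_ ?_ ?_
  · intro P hP
    have hP' := (hmemtf _).mp hP
    have hlo := mlow_le hP' hpart hu
    have hhi := le_mhigh hP' hu
    funext p
    rcases eq_or_ne p u with rfl | hne
    · simp only [Function.update_idem, Function.update_self, mlow_update hu, mhigh_update hu]
      omega
    · simp only [Function.update_of_ne hne]
  · intro P hP
    have hP' := (hmemtf _).mp hP
    have hlo := mlow_le hP' hpart hu
    have hhi := le_mhigh hP' hu
    funext p
    rcases eq_or_ne p u with rfl | hne
    · simp only [Function.update_idem, Function.update_self, mlow_update hu, mhigh_update hu]
      omega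
    · simp only [Function.update_of_ne hne]
  · intro P hP
    have hP' := (hmemtf _).mp hP
    have hlo := mlow_le hP' hpart hu
    have hhi := le_mhigh hP' hu
    rw [outcount_eq hP' hu, incount_eq hpart (sigma_mem hpart hP' hu) hu,
      Nat.card_Ioc, Nat.card_Ioc, mlow_update hu, Function.update_self]
    omega

set_option maxHeartbeats 800000 in
lemma identityI (hr : 1 ≤ r) (hpart : IsPartition lam r) (hbal : IsBalanced lam r)
    {P : (ℕ × ℕ) → ℕ} (hP : P ∈ RPP lam r k) (i : ℕ) :
    (∑ u ∈ ((Finset.Icc 1 r) ×ˢ (Finset.Icc 1 (lam 1))).filter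
        (fun u => IsShapeCorner (alphaShape lam r P i) u),
        ((lam 1 : ℤ) * u.1 + (r : ℤ) * u.2))
      - (r : ℤ) * (lam 1 : ℤ) * ((((Finset.Icc 1 r) ×ˢ (Finset.Icc 1 (lam 1))).filter
        (fun u => IsShapeCorner (alphaShape lam r P i) u)).card : ℤ)
      - (∑ u ∈ ((Finset.Icc 1 r) ×ˢ (Finset.Icc 1 (lam 1))).filter
        (fun u => IsProperOutsideCorner lam r (alphaShape lam r P i) u),
        ((lam 1 : ℤ) * u.1 + (r : ℤ) * u.2))
      + ((r : ℤ) + (lam 1 : ℤ) + (r : ℤ) * (lam 1 : ℤ))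
        * ((((Finset.Icc 1 r) ×ˢ (Finset.Icc 1 (lam 1))).filter
        (fun u => IsProperOutsideCorner lam r (alphaShape lam r P i) u)).card : ℤ)
      = (r : ℤ) * (lam 1 : ℤ) := by
  classical
  have hOC : ((Finset.Icc 1 r) ×ˢ (Finset.Icc 1 (lam 1))).filter
        (fun u => IsShapeCorner (alphaShape lam r P i) u)
      = ((Finset.Icc 1 r).filter
          (fun row => mfun lam r P i (row + 1) < mfun lam r P i row)).image
          (fun row => (row, mfun lam r P i row)) := by
    ext u
    simp only [Finset.mem_filter, Finset.mem_image, Finset.mem_product, Finset.mem_Icc]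
    constructor
    · rintro ⟨hbox, hcorner⟩
      obtain ⟨ha1, ha2, hcond, hval⟩ := (corner_iff hP).mp hcorner
      exact ⟨u.1, ⟨⟨ha1, ha2⟩, hcond⟩, by rw [← hval]⟩
    · rintro ⟨row, ⟨⟨hr1, hr2⟩, hcond⟩, rfl⟩
      have hm2 : mfun lam r P i row ≤ lam 1 :=
        le_trans mfun_le (lam_anti hpart 1 row le_rfl hr1 hr2)
      exact ⟨⟨⟨hr1, hr2⟩, ⟨by omega, hm2⟩⟩, (corner_iff hP).mpr ⟨hr1, hr2, hcond, rfl⟩⟩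
  have hIC : ((Finset.Icc 1 r) ×ˢ (Finset.Icc 1 (lam 1))).filter
        (fun u => IsProperOutsideCorner lam r (alphaShape lam r P i) u)
      = ((Finset.Icc 1 r).filter
          (fun row => mfun lam r P i row < lam row ∧
            (row = 1 ∨ mfun lam r P i row < mfun lam r P i (row - 1)))).image
          (fun row => (row, mfun lam r P i row + 1)) := by
    ext u
    simp only [Finset.mem_filter, Finset.mem_image, Finset.mem_product, Finset.mem_Icc]
    constructor
    · rintro ⟨hbox, hoc⟩
      obtain ⟨ha1, ha2, hlt, hcond, hval⟩ := (outside_iff hP).mp hoc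
      exact ⟨u.1, ⟨⟨ha1, ha2⟩, hlt, hcond⟩, by rw [← hval]⟩
    · rintro ⟨row, ⟨⟨hr1, hr2⟩, hlt, hcond⟩, rfl⟩
      have hm2 : lam row ≤ lam 1 := lam_anti hpart 1 row le_rfl hr1 hr2
      exact ⟨⟨⟨hr1, hr2⟩, ⟨by omega, by omega⟩⟩,
        (outside_iff hP).mpr ⟨hr1, hr2, hlt, hcond, rfl⟩⟩
  have hinj1 : Set.InjOn (fun row => ((row, mfun lam r P i row) : ℕ × ℕ))
      ((Finset.Icc 1 r).filter
        (fun row => mfun lam r P i (row + 1) < mfun lam r P i row)) :=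
    fun x _ y _ h => congrArg Prod.fst h
  have hinj2 : Set.InjOn (fun row => ((row, mfun lam r P i row + 1) : ℕ × ℕ))
      ((Finset.Icc 1 r).filter
        (fun row => mfun lam r P i row < lam row ∧
          (row = 1 ∨ mfun lam r P i row < mfun lam r P i (row - 1)))) :=
    fun x _ y _ h => congrArg Prod.fst h
  rw [hOC, hIC, Finset.card_image_of_injOn hinj1, Finset.card_image_of_injOn hinj2,
    Finset.sum_image (fun x hx y hy h => hinj1 hx hy h),
    Finset.sum_image (fun x hx y hy h => hinj2 hx hy h)]
  have hG := lemmaA hr hpart hbal (∑ row ∈ Finset.Icc 1 r, mfun lam r P i row)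
    (mfun lam r P i) rfl (fun row h1 h2 => mfun_anti hpart hP h1 h2)
    (fun row h1 h2 => mfun_le) (mfun_zero (by omega))
  conv_rhs => rw [← hG]
  rw [Finset.sum_filter, Finset.sum_filter, Finset.card_filter, Finset.card_filter]
  push_cast
  rw [Finset.mul_sum, Finset.mul_sum, ← Finset.sum_sub_distrib, ← Finset.sum_sub_distrib,
    ← Finset.sum_add_distrib]
  apply Finset.sum_congr rfl
  intro row hrow
  rw [G]
  split_ifs <;> (try dsimp only) <;> push_cast <;> ring

lemma identityII (hpart : IsPartition lam r) (hfin : (RPP lam r k).Finite) (g : ℕ × ℕ → ℤ) :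
    ∑ P ∈ hfin.toFinset, ∑ i ∈ Finset.Icc 1 k,
      ∑ u ∈ ((Finset.Icc 1 r) ×ˢ (Finset.Icc 1 (lam 1))).filter
        (fun u => IsShapeCorner (alphaShape lam r P i) u), g u
    = ∑ P ∈ hfin.toFinset, ∑ i ∈ Finset.Icc 1 k,
      ∑ u ∈ ((Finset.Icc 1 r) ×ˢ (Finset.Icc 1 (lam 1))).filter
        (fun u => IsProperOutsideCorner lam r (alphaShape lam r P i) u), g u := by
  classical
  have h1 : ∀ cond : ((ℕ × ℕ) → ℕ) → ℕ → (ℕ × ℕ) → Prop,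
      (∑ P ∈ hfin.toFinset, ∑ i ∈ Finset.Icc 1 k,
        ∑ u ∈ ((Finset.Icc 1 r) ×ˢ (Finset.Icc 1 (lam 1))).filter (cond P i), g u)
      = ∑ u ∈ (Finset.Icc 1 r) ×ˢ (Finset.Icc 1 (lam 1)), ∑ P ∈ hfin.toFinset,
          ((((Finset.Icc 1 k).filter (fun i => cond P i u)).card : ℤ) * g u) := by
    intro cond
    have hP1 : ∀ P, ∑ i ∈ Finset.Icc 1 k,
        ∑ u ∈ ((Finset.Icc 1 r) ×ˢ (Finset.Icc 1 (lam 1))).filter (cond P i), g u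
        = ∑ u ∈ (Finset.Icc 1 r) ×ˢ (Finset.Icc 1 (lam 1)),
            ((((Finset.Icc 1 k).filter (fun i => cond P i u)).card : ℤ) * g u) := by
      intro P
      rw [Finset.sum_comm' (t' := (Finset.Icc 1 r) ×ˢ (Finset.Icc 1 (lam 1)))
        (s' := fun u => (Finset.Icc 1 k).filter (fun i => cond P i u))
        (by intro i u; simp only [Finset.mem_filter]; tauto)]
      apply Finset.sum_congr rfl
      intro u _
      rw [Finset.sum_const, nsmul_eq_mul]
    rw [Finset.sum_congr rfl (fun P _ => hP1 P), Finset.sum_comm]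
  rw [h1, h1]
  apply Finset.sum_congr rfl
  intro u _
  rw [← Finset.sum_mul, ← Finset.sum_mul]
  congr 1
  by_cases hc : u ∈ cells lam r
  · exact_mod_cast toggle_sum hpart hfin hc
  · have e1 : ∀ P : (ℕ × ℕ) → ℕ, ∀ i : ℕ, ¬ IsShapeCorner (alphaShape lam r P i) u :=
      fun P i hcc => hc hcc.1.1
    have e2 : ∀ P : (ℕ × ℕ) → ℕ, ∀ i : ℕ,
        ¬ IsProperOutsideCorner lam r (alphaShape lam r P i) u :=
      fun P i hcc => hc hcc.1
    have f1 : ∀ P : (ℕ × ℕ) → ℕ,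
        ((Finset.Icc 1 k).filter (fun i => IsShapeCorner (alphaShape lam r P i) u)) = ∅ :=
      fun P => Finset.filter_eq_empty_iff.mpr (fun i _ => e1 P i)
    have f2 : ∀ P : (ℕ × ℕ) → ℕ,
        ((Finset.Icc 1 k).filter
          (fun i => IsProperOutsideCorner lam r (alphaShape lam r P i) u)) = ∅ :=
      fun P => Finset.filter_eq_empty_iff.mpr (fun i _ => e2 P i)
    rw [Finset.sum_eq_zero (fun P _ => by rw [f1 P]; simp),
      Finset.sum_eq_zero (fun P _ => by rw [f2 P]; simp)]

end Dev

/-- Theorem 2.2, weak-distribution form: for a balanced partition `λ`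
with `r` rows and `c` columns,
`(r + c) · Σ_{P ∈ RPP(λ,k)} Σ_{i=1}^k jag(α(P,i)) = 2 · r · c · k · |RPP(λ,k)|`,
i.e. the expected jaggedness under the weak distribution is `2rc/(r+c)`. -/
theorem expected_jaggedness_weak (lam : ℕ → ℕ) (r c k : ℕ)
    (hpart : IsPartition lam r) (hbal : IsBalanced lam r) (hc : c = lam 1) (hk : 1 ≤ k) :
    (r + c) * (∑ᶠ P ∈ RPP lam r k, ∑ i ∈ Finset.Icc 1 k, jag lam r (alphaShape lam r P i))
      = 2 * r * c * k * (RPP lam r k).ncard := by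
  classical
  subst hc
  rcases Nat.eq_zero_or_pos r with hr0 | hr
  · subst hr0
    have hjag : ∀ P : (ℕ × ℕ) → ℕ, ∀ i : ℕ, jag lam 0 (alphaShape lam 0 P i) = 0 := by
      intro P i
      have h1 : {p | IsShapeCorner (alphaShape lam 0 P i) p} = ∅ := by
        ext p
        simp only [Set.mem_setOf_eq, Set.mem_empty_iff_false, iff_false]
        rintro ⟨⟨⟨g1, g2, -⟩, -⟩, -⟩
        omega
      have h2 : {p | IsProperOutsideCorner lam 0 (alphaShape lam 0 P i) p} = ∅ := by
        ext p
        simp only [Set.mem_setOf_eq, Set.mem_empty_iff_false, iff_false]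
        rintro ⟨⟨g1, g2, -⟩, -⟩
        omega
      rw [jag, h1, h2]
      simp
    have hz : (∑ᶠ P ∈ RPP lam 0 k, ∑ i ∈ Finset.Icc 1 k, jag lam 0 (alphaShape lam 0 P i))
        = 0 := by
      have := finsum_mem_congr (rfl : RPP lam 0 k = RPP lam 0 k)
        (fun P _ => (Finset.sum_eq_zero (fun i _ => hjag P i) :
          ∑ i ∈ Finset.Icc 1 k, jag lam 0 (alphaShape lam 0 P i) = 0))
      rw [this]
      simp
    rw [hz]
    simp
  · have hfin : (RPP lam r k).Finite := rpp_finite hpart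
    rw [← Set.Finite.coe_toFinset hfin, finsum_mem_coe_finset, Set.ncard_coe_finset]
    have hjag : ∀ P ∈ hfin.toFinset, ∀ i : ℕ, jag lam r (alphaShape lam r P i)
        = (((Finset.Icc 1 r) ×ˢ (Finset.Icc 1 (lam 1))).filter
            (fun u => IsShapeCorner (alphaShape lam r P i) u)).card
          + (((Finset.Icc 1 r) ×ˢ (Finset.Icc 1 (lam 1))).filter
            (fun u => IsProperOutsideCorner lam r (alphaShape lam r P i) u)).card := by
      intro P hPR i
      have h1 : {p | IsShapeCorner (alphaShape lam r P i) p}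
          = ↑(((Finset.Icc 1 r) ×ˢ (Finset.Icc 1 (lam 1))).filter
            (fun u => IsShapeCorner (alphaShape lam r P i) u)) := by
        ext p
        constructor
        · intro hp
          exact Finset.mem_coe.mpr (Finset.mem_filter.mpr
            ⟨cells_subset_box hpart hp.1.1, hp⟩)
        · intro hp
          exact (Finset.mem_filter.mp (Finset.mem_coe.mp hp)).2
      have h2 : {p | IsProperOutsideCorner lam r (alphaShape lam r P i) p}
          = ↑(((Finset.Icc 1 r) ×ˢ (Finset.Icc 1 (lam 1))).filter
            (fun u => IsProperOutsideCorner lam r (alphaShape lam r P i) u)) := by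
        ext p
        constructor
        · intro hp
          exact Finset.mem_coe.mpr (Finset.mem_filter.mpr
            ⟨cells_subset_box hpart hp.1, hp⟩)
        · intro hp
          exact (Finset.mem_filter.mp (Finset.mem_coe.mp hp)).2
      rw [jag, h1, h2, Set.ncard_coe_finset, Set.ncard_coe_finset]
    rw [Finset.sum_congr rfl (fun P hPR => Finset.sum_congr rfl (fun i _ => hjag P hPR i))]
    -- pass to ℤ
    have hII1 := identityII hpart hfin (fun _ => (1 : ℤ))
    simp only [Finset.sum_const, nsmul_eq_mul, mul_one] at hII1
    have hIIw := identityII hpart hfin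
      (fun u => ((lam 1 : ℤ) * u.1 + (r : ℤ) * u.2))
    have hId := Finset.sum_congr rfl (fun P (hPR : P ∈ hfin.toFinset) =>
      Finset.sum_congr rfl (fun i (_ : i ∈ Finset.Icc 1 k) =>
        identityI hr hpart hbal ((Set.Finite.mem_toFinset hfin).mp hPR) i))
    rw [Finset.sum_const, Finset.sum_const, Nat.card_Icc, Nat.add_sub_cancel] at hId
    simp only [Finset.sum_sub_distrib, Finset.sum_add_distrib, ← Finset.mul_sum,
      nsmul_eq_mul, smul_eq_mul] at hId
    simp only [Finset.sum_add_distrib, ← Finset.mul_sum] at hIIw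
    have hZ : ((r : ℤ) + (lam 1 : ℤ)) * (∑ P ∈ hfin.toFinset, ∑ i ∈ Finset.Icc 1 k,
        (((((Finset.Icc 1 r) ×ˢ (Finset.Icc 1 (lam 1))).filter
            (fun u => IsShapeCorner (alphaShape lam r P i) u)).card : ℤ)
          + ((((Finset.Icc 1 r) ×ˢ (Finset.Icc 1 (lam 1))).filter
            (fun u => IsProperOutsideCorner lam r (alphaShape lam r P i) u)).card : ℤ)))
        = 2 * (r : ℤ) * (lam 1 : ℤ) * (k : ℤ) * (hfin.toFinset.card : ℤ) := by
      simp only [Finset.sum_add_distrib]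
      linear_combination (2 : ℤ) * hId - 2 * hIIw
        + ((r : ℤ) + (lam 1 : ℤ) + 2 * (r : ℤ) * (lam 1 : ℤ)) * hII1
    exact_mod_cast hZ
end
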